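/- arXiv:2501.17743 — 6 statements merged into one kernel-verified Lean document; each statement's English description precedes it below -/
import Mathlib

section
/- For every vector v in R^d and every S ≥ 0, the scalar products ⟨v_i(t), v⟩ of the agents' velocities with v remain bounded between the minimum and maximum of ⟨v_j(s), v⟩ over j = 1,...,N and s in [S - τ̄, S], for all t ≥ S - τ̄ and all i = 1,...,N. -/
open scoped BigOperators RealInnerProductSpace

/-- The Cucker-Smale system with time-dependent pointwise time delay and
communication failures (weight function `α`). -/
structure CS (d N : ℕ) where
  /-- positions -/
  x : Fin N → ℝ → EuclideanSpace ℝ (Fin d)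
  /-- velocities -/
  v : Fin N → ℝ → EuclideanSpace ℝ (Fin d)
  /-- influence function -/
  ψ : ℝ → ℝ
  /-- weight function modelling communication failures -/
  α : ℝ → ℝ
  /-- time delay function -/
  τ : ℝ → ℝ
  /-- bound on the time delay -/
  τbar : ℝ
  τbar_nonneg : 0 ≤ τbar
  τ_cont : Continuous τ
  τ_mem : ∀ t, 0 ≤ t → τ t ∈ Set.Icc 0 τbar
  ψ_pos : ∀ r, 0 < ψ r
  ψ_cont : Continuous ψ
  ψ_bdd : BddAbove (Set.range ψ)
  α_meas : Measurable α
  α_mem : ∀ t, 0 ≤ t → α t ∈ Set.Icc (0:ℝ) 1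
  x_cont : ∀ i, Continuous (x i)
  v_cont : ∀ i, Continuous (v i)
  x_deriv : ∀ i, ∀ t, 0 < t → HasDerivAt (x i) (v i t) t
  v_deriv : ∀ i, ∀ t, 0 < t → HasDerivAt (v i)
    (∑ j ∈ Finset.univ.erase i,
      (α t * (ψ ‖x i t - x j (t - τ t)‖ / ((N : ℝ) - 1))) • (v j (t - τ t) - v i t)) t

namespace CS

variable {d N : ℕ}

/-- communication rates -/
noncomputable def b (S : CS d N) (i j : Fin N) (t : ℝ) : ℝ :=
  S.ψ ‖S.x i t - S.x j (t - S.τ t)‖ / ((N : ℝ) - 1)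

/-- `K = ‖ψ‖_∞` -/
noncomputable def K (S : CS d N) : ℝ := sSup (Set.range S.ψ)

/-- position diameter -/
noncomputable def dX (S : CS d N) (t : ℝ) : ℝ :=
  sSup {r | ∃ i j : Fin N, r = ‖S.x i t - S.x j t‖}

/-- velocity diameter -/
noncomputable def dV (S : CS d N) (t : ℝ) : ℝ :=
  sSup {r | ∃ i j : Fin N, r = ‖S.v i t - S.v j t‖}

/-- generalized velocity diameters `D_n` -/
noncomputable def Dn (S : CS d N) (T : ℝ) (n : ℕ) : ℝ :=
  sSup {r | ∃ i j : Fin N, ∃ s ∈ Set.Icc ((n : ℝ) * T - S.τbar) ((n : ℝ) * T),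
    ∃ u ∈ Set.Icc ((n : ℝ) * T - S.τbar) ((n : ℝ) * T), r = ‖S.v i s - S.v j u‖}

/-- `C_0^V`, uniform bound of the initial velocities -/
noncomputable def C0V (S : CS d N) : ℝ :=
  sSup {r | ∃ j : Fin N, ∃ s ∈ Set.Icc (-S.τbar) 0, r = ‖S.v j s‖}

/-- `M_0^X` -/
noncomputable def M0X (S : CS d N) : ℝ :=
  sSup {r | ∃ l : Fin N, ∃ s ∈ Set.Icc (-S.τbar) 0, ∃ u ∈ Set.Icc (-S.τbar) 0,
    r = ‖S.x l s - S.x l u‖}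

/-- the auxiliary function `φ` -/
noncomputable def phi (S : CS d N) (t : ℝ) : ℝ :=
  sInf (S.ψ '' Set.Icc 0 (S.τbar * S.C0V + S.M0X + sSup (S.dX '' Set.Icc (-S.τbar) t)))

end CS
set_option maxHeartbeats 1000000 in
open Filter Topology in
private lemma cs_upper {d N : ℕ} (S : CS d N) (hN : 2 ≤ N)
    (w : EuclideanSpace ℝ (Fin d)) (S0 : ℝ) (hS0 : 0 ≤ S0) :
    ∀ t, S0 - S.τbar ≤ t → ∀ i : Fin N,
      ⟪S.v i t, w⟫ ≤
        sSup {r | ∃ j : Fin N, ∃ s ∈ Set.Icc (S0 - S.τbar) S0, r = ⟪S.v j s, w⟫} := by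
  have hτ := S.τbar_nonneg
  set h : Fin N → ℝ → ℝ := fun j t => ⟪S.v j t, w⟫ with hh
  have hcont : ∀ j, Continuous (h j) := fun j => (S.v_cont j).inner continuous_const
  set K : Set ℝ := {r | ∃ j : Fin N, ∃ s ∈ Set.Icc (S0 - S.τbar) S0, r = h j s} with hKdef
  have hNpos : 0 < N := by omega
  have hKbdd : BddAbove K := by
    have hsub : K ⊆ ⋃ j ∈ (Set.univ : Set (Fin N)), h j '' Set.Icc (S0 - S.τbar) S0 := by
      rintro r ⟨j, s, hs, rfl⟩
      exact Set.mem_biUnion trivial ⟨s, hs, rfl⟩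
    refine BddAbove.mono hsub ?_
    exact (Set.finite_univ.bddAbove_biUnion).mpr
      (fun j _ => (isCompact_Icc.image (hcont j)).bddAbove)
  set M : ℝ := sSup K with hMdef
  have hMle : ∀ j : Fin N, ∀ s, S0 - S.τbar ≤ s → s ≤ S0 → h j s ≤ M :=
    fun j s h1 h2 => le_csSup hKbdd ⟨j, s, ⟨h1, h2⟩, rfl⟩
  have key : ∀ ε : ℝ, 0 < ε → ∀ t, S0 ≤ t → ∀ i : Fin N, h i t < M + ε * (1 + t - S0) := by
    by_contra hcon
    push_neg at hcon
    obtain ⟨ε, hε, tb, htb, ib, hib⟩ := hcon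
    set bad : Set ℝ := {t | S0 ≤ t ∧ ∃ i : Fin N, M + ε * (1 + t - S0) ≤ h i t} with hbaddef
    have hbadne : bad.Nonempty := ⟨tb, htb, ib, hib⟩
    have hbadbdd : BddBelow bad := ⟨S0, fun t ht => ht.1⟩
    have hbadcl : IsClosed bad := by
      have heq : bad = Set.Ici S0 ∩ ⋃ i : Fin N, {t | M + ε * (1 + t - S0) ≤ h i t} := by
        ext t
        constructor
        · rintro ⟨h1, i, h2⟩
          exact ⟨h1, Set.mem_iUnion.mpr ⟨i, h2⟩⟩
        · rintro ⟨h1, h2⟩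
          obtain ⟨i, h2⟩ := Set.mem_iUnion.mp h2
          exact ⟨h1, i, h2⟩
      rw [heq]
      exact isClosed_Ici.inter (isClosed_iUnion_of_finite fun i =>
        isClosed_le (continuous_const.add (continuous_const.mul (((continuous_const.add continuous_id).sub continuous_const))) : Continuous fun s : ℝ => M + ε * (1 + s - S0)) (hcont i))
    set t0 : ℝ := sInf bad with ht0def
    have ht0mem : t0 ∈ bad := hbadcl.csInf_mem hbadne hbadbdd
    have ht0S0 : S0 ≤ t0 := ht0mem.1
    have ht0gt : S0 < t0 := by
      rcases eq_or_lt_of_le ht0S0 with heq | hlt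
      · exfalso
        obtain ⟨_, i, hi⟩ := ht0mem
        rw [← heq] at hi
        have := hMle i S0 (by linarith) le_rfl
        nlinarith
      · exact hlt
    have hbefore : ∀ s, S0 ≤ s → s < t0 → ∀ j : Fin N, h j s < M + ε * (1 + s - S0) := by
      intro s hs1 hs2 j
      by_contra hcon2
      push_neg at hcon2
      exact absurd (csInf_le hbadbdd ⟨hs1, j, hcon2⟩) (not_le.mpr hs2)
    have hclosure : ∀ j : Fin N, h j t0 ≤ M + ε * (1 + t0 - S0) := by
      intro j
      have hlim : Tendsto (fun s => h j s - (M + ε * (1 + s - S0))) (𝓝[<] t0)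
          (𝓝 (h j t0 - (M + ε * (1 + t0 - S0)))) :=
        (((hcont j).sub (continuous_const.add (continuous_const.mul (((continuous_const.add continuous_id).sub continuous_const))) : Continuous fun s : ℝ => M + ε * (1 + s - S0))).continuousWithinAt (s := Set.Iio t0) (x := t0))
      have hev : ∀ᶠ s in 𝓝[<] t0, h j s - (M + ε * (1 + s - S0)) ≤ 0 := by
        filter_upwards [eventually_nhdsWithin_of_eventually_nhds (eventually_gt_nhds ht0gt),
          self_mem_nhdsWithin] with s hs1 hs2
        have := hbefore s (le_of_lt hs1) hs2 j
        linarith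
      have := le_of_tendsto hlim hev
      linarith
    have hmono : ∀ j : Fin N, ∀ u, S0 - S.τbar ≤ u → u ≤ t0 → h j u ≤ M + ε * (1 + t0 - S0) := by
      intro j u hu1 hu2
      rcases le_or_gt u S0 with hu | hu
      · have := hMle j u hu1 hu
        nlinarith
      · rcases eq_or_lt_of_le hu2 with heq | hlt
        · rw [heq]; exact hclosure j
        · have := hbefore u (le_of_lt hu) hlt j
          nlinarith
    obtain ⟨_, i, hieq'⟩ := ht0mem
    have hieq : h i t0 = M + ε * (1 + t0 - S0) := le_antisymm (hclosure i) hieq'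
    have ht0pos : 0 < t0 := lt_of_le_of_lt hS0 ht0gt
    have hvd := S.v_deriv i t0 ht0pos
    set D : ℝ := ⟪(∑ j ∈ Finset.univ.erase i,
        (S.α t0 * (S.ψ ‖S.x i t0 - S.x j (t0 - S.τ t0)‖ / ((N : ℝ) - 1))) •
          (S.v j (t0 - S.τ t0) - S.v i t0)), w⟫ with hDdef
    have hd : HasDerivAt (h i) D t0 := by
      have h2 := HasDerivAt.inner (𝕜 := ℝ) hvd (hasDerivAt_const t0 w)
      have h3 : HasDerivAt (fun t => ⟪S.v i t, w⟫) D t0 := by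
        simpa only [inner_zero_right, zero_add] using h2
      exact h3
    have hDval : D = ∑ j ∈ Finset.univ.erase i,
        (S.α t0 * (S.ψ ‖S.x i t0 - S.x j (t0 - S.τ t0)‖ / ((N : ℝ) - 1))) *
          (h j (t0 - S.τ t0) - h i t0) := by
      rw [hDdef, sum_inner]
      refine Finset.sum_congr rfl fun j hj => ?_
      rw [real_inner_smul_left, inner_sub_left]
    have hDnonpos : D ≤ 0 := by
      rw [hDval]
      refine Finset.sum_nonpos fun j hj => ?_
      have hτt0 := S.τ_mem t0 ht0pos.le
      have hα := S.α_mem t0 ht0pos.le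
      have hN1 : (0:ℝ) < (N : ℝ) - 1 := by
        have : (2:ℝ) ≤ (N : ℝ) := by exact_mod_cast hN
        linarith
      have hc : 0 ≤ S.α t0 * (S.ψ ‖S.x i t0 - S.x j (t0 - S.τ t0)‖ / ((N : ℝ) - 1)) :=
        mul_nonneg hα.1 (div_nonneg (S.ψ_pos _).le hN1.le)
      have hdelayed : h j (t0 - S.τ t0) ≤ h i t0 := by
        rw [hieq]
        exact hmono j (t0 - S.τ t0) (by linarith [hτt0.1, hτt0.2]) (by linarith [hτt0.1])
      exact mul_nonpos_iff.mpr (Or.inl ⟨hc, by linarith⟩)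
    have hbar : HasDerivAt (fun t : ℝ => M + ε * (1 + t - S0)) ε t0 := by
      have h1 : HasDerivAt (fun t : ℝ => 1 + t - S0) 1 t0 := by
        simpa using ((hasDerivAt_id t0).const_add 1).sub_const S0
      have h2 := h1.const_mul ε
      simpa using h2.const_add M
    have hg : HasDerivAt (fun t => h i t - (M + ε * (1 + t - S0))) (D - ε) t0 := hd.sub hbar
    have hslope : Tendsto (slope (fun t => h i t - (M + ε * (1 + t - S0))) t0)
        (𝓝[Set.Iio t0] t0) (𝓝 (D - ε)) :=
      (hasDerivWithinAt_iff_tendsto_slope' (by simp)).mp (hg.hasDerivWithinAt (s := Set.Iio t0))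
    have h0le : 0 ≤ D - ε := by
      refine ge_of_tendsto hslope ?_
      filter_upwards [self_mem_nhdsWithin,
        eventually_nhdsWithin_of_eventually_nhds (eventually_gt_nhds ht0gt)] with s hs1 hs2
      have hneg : h i s - (M + ε * (1 + s - S0)) < 0 := by
        have := hbefore s hs2.le hs1 i
        linarith
      have hzero : h i t0 - (M + ε * (1 + t0 - S0)) = 0 := by rw [hieq]; ring
      rw [slope_def_field, hzero]
      refine div_nonneg_iff.mpr (Or.inr ⟨by linarith, by simp at hs1; linarith⟩)
    linarith
  intro t ht i
  rcases le_or_gt t S0 with h1 | h1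
  · exact hMle i t ht h1
  · refine le_of_forall_pos_le_add ?_
    intro δ hδ
    have hc : 0 < 1 + t - S0 := by linarith
    have hkey := key (δ / (1 + t - S0)) (div_pos hδ hc) t h1.le i
    rw [div_mul_cancel₀ δ hc.ne'] at hkey
    linarith


set_option maxHeartbeats 1000000 in
/-- invariance of the convex hull of delayed velocities in every direction. -/
theorem cs_scalar_product_bounds {d N : ℕ} (S : CS d N) (hN : 2 ≤ N)
    (w : EuclideanSpace ℝ (Fin d)) (S0 : ℝ) (hS0 : 0 ≤ S0) :
    ∀ t, S0 - S.τbar ≤ t → ∀ i : Fin N,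
      sInf {r | ∃ j : Fin N, ∃ s ∈ Set.Icc (S0 - S.τbar) S0, r = ⟪S.v j s, w⟫}
          ≤ ⟪S.v i t, w⟫ ∧
        ⟪S.v i t, w⟫ ≤
          sSup {r | ∃ j : Fin N, ∃ s ∈ Set.Icc (S0 - S.τbar) S0, r = ⟪S.v j s, w⟫} := by

  intro t ht i
  refine ⟨?_, cs_upper S hN w S0 hS0 t ht i⟩
  have hup := cs_upper S hN (-w) S0 hS0 t ht i
  have hset : {r | ∃ j : Fin N, ∃ s ∈ Set.Icc (S0 - S.τbar) S0, r = ⟪S.v j s, -w⟫}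
      = -{r | ∃ j : Fin N, ∃ s ∈ Set.Icc (S0 - S.τbar) S0, r = ⟪S.v j s, w⟫} := by
    ext r
    simp only [Set.mem_neg, Set.mem_setOf_eq, inner_neg_right]
    constructor <;> rintro ⟨j, s, hs, hr⟩ <;> exact ⟨j, s, hs, by linarith⟩
  rw [hset, inner_neg_right] at hup
  rw [Real.sInf_def]
  linarith
end

section
/- Defining D_n := max_{i,j} max_{s,t ∈ [nT - τ̄, nT]} |v_i(s) - v_j(t)| for n ∈ N_0 (with T ≥ τ̄), one has |v_i(s) - v_j(t)| ≤ D_n for all s, t ≥ nT - τ̄ and all i, j = 1,...,N; in particular the sequence (D_n) is nonincreasing. -/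
open scoped BigOperators RealInnerProductSpace

section Aux

open Set Filter Topology

variable {d N : ℕ}

/-- Uniform bound on velocities over a compact time interval. -/
private lemma cs_exists_vbound (S : CS d N) (a b : ℝ) :
    ∃ C : ℝ, 0 ≤ C ∧ ∀ i : Fin N, ∀ t ∈ Set.Icc a b, ‖S.v i t‖ ≤ C := by
  have h : ∀ i : Fin N, ∃ C, ∀ t ∈ Set.Icc a b, ‖S.v i t‖ ≤ C := fun i =>
    isCompact_Icc.exists_bound_of_continuousOn (S.v_cont i).continuousOn
  choose C hC using h
  refine ⟨∑ i : Fin N, |C i|, Finset.sum_nonneg fun i _ => abs_nonneg _, fun i t ht => ?_⟩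
  exact (hC i t ht).trans ((le_abs_self _).trans
    (Finset.single_le_sum (fun j _ => abs_nonneg (C j)) (Finset.mem_univ i)))

/-- The key comparison lemma: if a linear functional of the velocities is bounded by `M`
on `[t0 - τ̄, t0]`, it stays bounded by `M` forever after. -/
private lemma cs_key (S : CS d N) (hN : 2 ≤ N) (t0 : ℝ) (ht0 : 0 ≤ t0)
    (w : EuclideanSpace ℝ (Fin d)) (M : ℝ)
    (hM : ∀ i : Fin N, ∀ u ∈ Set.Icc (t0 - S.τbar) t0, ⟪w, S.v i u⟫ ≤ M) :
    ∀ i : Fin N, ∀ s : ℝ, t0 - S.τbar ≤ s → ⟪w, S.v i s⟫ ≤ M := by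
  set f : Fin N → ℝ → ℝ := fun i t => ⟪w, S.v i t⟫ with hf
  have fcont : ∀ i, Continuous (f i) := fun i =>
    Continuous.inner (continuous_const : Continuous fun _ : ℝ => w) (S.v_cont i)
  have fderiv : ∀ i t, 0 < t → HasDerivAt (f i)
      (∑ j ∈ Finset.univ.erase i,
        (S.α t * (S.ψ ‖S.x i t - S.x j (t - S.τ t)‖ / ((N : ℝ) - 1))) *
          (f j (t - S.τ t) - f i t)) t := by
    intro i t ht
    have h1 := S.v_deriv i t ht
    have h2 := (innerSL ℝ w).hasFDerivAt.comp_hasDerivAt t h1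
    have h3 : ((innerSL ℝ w) ∘ S.v i) = f i := by
      funext u; simp [hf]
    rw [h3] at h2
    refine h2.congr_deriv ?_; symm
    rw [map_sum]
    apply Finset.sum_congr rfl
    intro k _
    rw [map_smul, map_sub, smul_eq_mul, innerSL_apply_apply, innerSL_apply_apply]
  -- the main claim with barrier
  have claim : ∀ ε : ℝ, 0 < ε → ∀ t : ℝ, t0 < t → ∀ j : Fin N,
      f j t ≤ M + ε + ε * (t - t0) := by
    intro ε hε
    set B : ℝ → ℝ := fun t => M + ε + ε * (t - t0) with hB
    have Bcont : Continuous B := by fun_prop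
    have Bmono : ∀ u v : ℝ, u ≤ v → B u ≤ B v := by
      intro u v huv; simp only [hB]; nlinarith
    by_contra hc
    push_neg at hc
    obtain ⟨t1, ht1, j1, hj1⟩ := hc
    set Bad : Set ℝ := {t : ℝ | t0 < t ∧ ∃ j : Fin N, B t < f j t} with hBad
    have hne : Bad.Nonempty := ⟨t1, ht1, j1, hj1⟩
    have hbdd : BddBelow Bad := ⟨t0, fun x hx => hx.1.le⟩
    set c : ℝ := sInf Bad with hc'
    have hct0 : t0 ≤ c := le_csInf hne fun x hx => hx.1.le
    -- values before c are below the barrier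
    have hlt : ∀ u : ℝ, t0 < u → u < c → ∀ j : Fin N, f j u ≤ B u := by
      intro u hu1 hu2 j
      by_contra hcon
      exact absurd (csInf_le hbdd ⟨hu1, j, not_le.1 hcon⟩) (not_le.2 hu2)
    -- values at or before c, on [t0 - τbar, c], are ≤ B c
    have hle_c : ∀ u ∈ Set.Icc (t0 - S.τbar) c, ∀ j : Fin N, f j u ≤ B c := by
      intro u hu j
      rcases le_or_gt u t0 with h1 | h1
      · have := hM j u ⟨hu.1, h1⟩
        have : f j u ≤ M := this
        have hMc : M ≤ B c := by simp only [hB]; nlinarith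
        linarith
      · rcases lt_or_eq_of_le hu.2 with h2 | h2
        · exact (hlt u h1 h2 j).trans (Bmono u c hu.2)
        · rw [h2] at h1 ⊢
          -- limit from the left
          have hten : Tendsto (fun x => f j x - B x) (𝓝[<] c) (𝓝 (f j c - B c)) :=
            (((fcont j).sub Bcont).tendsto c).mono_left nhdsWithin_le_nhds
          have hev : ∀ᶠ x in 𝓝[<] c, f j x - B x ≤ 0 := by
            filter_upwards [Ioo_mem_nhdsLT h1] with x hx
            have := hlt x hx.1 hx.2 j
            linarith
          have := le_of_tendsto hten hev
          linarith
    have hcnotbad : c ∉ Bad := by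
      rintro ⟨h1, j, h2⟩
      exact absurd (hle_c c ⟨by linarith [S.τbar_nonneg], le_refl c⟩ j) (not_le.2 h2)
    -- bad points accumulate at c from the right
    have hfreq : ∃ᶠ x in 𝓝 c, x ∈ Bad := mem_closure_iff_frequently.1 (csInf_mem_closure hne hbdd)
    have hBadIoi : ∀ x ∈ Bad, c < x := by
      intro x hx
      rcases lt_or_eq_of_le (csInf_le hbdd hx) with h | h
      · exact h
      · exfalso; apply hcnotbad; rw [hc', h]; exact hx
    have hpigeon : ∃ j : Fin N, ∃ᶠ x in 𝓝 c, c < x ∧ B x < f j x := by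
      by_contra hc2
      push_neg at hc2
      have hall : ∀ᶠ x in 𝓝 c, ∀ j : Fin N, ¬(c < x ∧ B x < f j x) :=
        Filter.eventually_all.2 fun j => (hc2 j).mono fun x hx => by push_neg; exact hx
      obtain ⟨x, hx1, hx2⟩ := (hfreq.and_eventually hall).exists
      obtain ⟨j, hj⟩ := hx1.2
      exact hx2 j ⟨hBadIoi x hx1, hj⟩
    obtain ⟨j, hfj⟩ := hpigeon
    -- f j c = B c
    have hfeq : f j c = B c := by
      refine le_antisymm (hle_c c ⟨by linarith [S.τbar_nonneg], le_refl c⟩ j) ?_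
      by_contra hcon
      push_neg at hcon
      have hten : Tendsto (fun x => f j x - B x) (𝓝 c) (𝓝 (f j c - B c)) :=
        ((fcont j).sub Bcont).tendsto c
      have hev : ∀ᶠ x in 𝓝 c, f j x - B x < 0 :=
        hten.eventually_lt_const (by linarith)
      obtain ⟨x, hx1, hx2⟩ := (hfj.and_eventually hev).exists
      linarith [hx1.2]
    -- c > t0
    have hct0' : t0 < c := by
      rcases lt_or_eq_of_le hct0 with h | h
      · exact h
      · exfalso
        have h1 : f j c ≤ M := hM j c ⟨by linarith [S.τbar_nonneg], h.ge⟩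
        have h2 : B c = M + ε := by simp only [hB, ← h]; ring
        rw [hfeq, h2] at h1
        linarith
    have hcpos : 0 < c := lt_of_le_of_lt ht0 hct0'
    -- derivative at c is nonpositive
    have hda := fderiv j c hcpos
    set a : ℝ := ∑ k ∈ Finset.univ.erase j,
      (S.α c * (S.ψ ‖S.x j c - S.x k (c - S.τ c)‖ / ((N : ℝ) - 1))) *
        (f k (c - S.τ c) - f j c) with ha
    have hτc := S.τ_mem c hcpos.le
    have haneg : a ≤ 0 := by
      apply Finset.sum_nonpos
      intro k _
      apply mul_nonpos_of_nonneg_of_nonpos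
      · apply mul_nonneg (S.α_mem c hcpos.le).1
        apply div_nonneg (S.ψ_pos _).le
        have : (2 : ℝ) ≤ (N : ℝ) := by exact_mod_cast hN
        linarith
      · have hmem : c - S.τ c ∈ Set.Icc (t0 - S.τbar) c :=
          ⟨by linarith [hτc.2], by linarith [hτc.1]⟩
        have := hle_c (c - S.τ c) hmem k
        rw [hfeq]
        linarith
    -- g := f j - B has negative derivative at c but is frequently positive to the right
    have hBd : HasDerivAt B ε c := by
      have : HasDerivAt (fun t : ℝ => M + ε + ε * (t - t0)) (ε * 1) c := by
        exact (((hasDerivAt_id c).sub_const t0).const_mul ε).const_add (M + ε)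
      simpa [hB] using this
    have hg : HasDerivAt (fun x => f j x - B x) (a - ε) c := hda.sub hBd
    rw [hasDerivAt_iff_tendsto_slope] at hg
    have hev : ∀ᶠ x in 𝓝[≠] c, slope (fun x => f j x - B x) c x < 0 :=
      hg.eventually_lt_const (by linarith)
    have hfreq' : ∃ᶠ x in 𝓝[≠] c, 0 < slope (fun x => f j x - B x) c x := by
      rw [frequently_nhdsWithin_iff]
      refine hfj.mono ?_
      rintro x ⟨hx1, hx2⟩
      constructor
      · rw [slope_def_field]
        apply div_pos
        · rw [hfeq]; linarith
        · linarith
      · exact fun h => absurd (h ▸ hx1) (lt_irrefl c)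
    obtain ⟨x, hx1, hx2⟩ := (hfreq'.and_eventually hev).exists
    linarith
  -- conclude by letting ε → 0
  intro i s hs
  rcases le_or_gt s t0 with h | h
  · exact hM i s ⟨hs, h⟩
  · by_contra hcon
    push_neg at hcon
    set ε : ℝ := (f i s - M) / (2 * (1 + (s - t0))) with hε
    have hd : 0 < 1 + (s - t0) := by linarith
    have hεpos : 0 < ε := div_pos (by linarith) (by linarith)
    have := claim ε hεpos s h i
    have hεs : ε + ε * (s - t0) = ε * (1 + (s - t0)) := by ring
    have h2 : ε * (1 + (s - t0)) = (f i s - M) / 2 := by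
      field_simp [hε]
      have hdc := div_mul_cancel₀ (f i s - M) (ne_of_gt (by linarith : (0:ℝ) < 2 * (1 + (s - t0))))
      rw [← hε] at hdc
      linear_combination hdc
    have : f i s ≤ M + (f i s - M) / 2 := by
      calc f i s ≤ M + ε + ε * (s - t0) := this
        _ = M + (ε + ε * (s - t0)) := by ring
        _ = M + (f i s - M) / 2 := by rw [hεs, h2]
    linarith

end Aux
/-- properties of the generalized velocity diameters `D_n`. -/
theorem cs_Dn_bounds {d N : ℕ} (S : CS d N) (hN : 2 ≤ N)
    (T : ℝ) (hT : 0 < T) (hTτ : S.τbar ≤ T) :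
    (∀ n : ℕ, ∀ i j : Fin N, ∀ s u : ℝ,
      (n : ℝ) * T - S.τbar ≤ s → (n : ℝ) * T - S.τbar ≤ u →
        ‖S.v i s - S.v j u‖ ≤ S.Dn T n) ∧
    (∀ n : ℕ, S.Dn T (n + 1) ≤ S.Dn T n) := by
  have i0 : Fin N := ⟨0, by omega⟩
  have hpart1 : ∀ n : ℕ, ∀ i j : Fin N, ∀ s u : ℝ,
      (n : ℝ) * T - S.τbar ≤ s → (n : ℝ) * T - S.τbar ≤ u →
        ‖S.v i s - S.v j u‖ ≤ S.Dn T n := by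
    intro n i j s u hs hu
    set t0 : ℝ := (n : ℝ) * T with ht0def
    have ht0 : 0 ≤ t0 := mul_nonneg (Nat.cast_nonneg n) hT.le
    have ht0I : t0 ∈ Set.Icc (t0 - S.τbar) t0 := ⟨by linarith [S.τbar_nonneg], le_refl _⟩
    obtain ⟨C, hC0, hC⟩ := cs_exists_vbound S (t0 - S.τbar) t0
    -- the Dn set
    set Dset : Set ℝ := {r | ∃ i j : Fin N, ∃ s ∈ Set.Icc (t0 - S.τbar) t0,
      ∃ u ∈ Set.Icc (t0 - S.τbar) t0, r = ‖S.v i s - S.v j u‖} with hDset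
    have hDn : S.Dn T n = sSup Dset := rfl
    have hDbdd : BddAbove Dset := by
      refine ⟨C + C, ?_⟩
      rintro r ⟨i', j', s', hs', u', hu', rfl⟩
      exact (norm_sub_le _ _).trans (add_le_add (hC i' s' hs') (hC j' u' hu'))
    have hDmem : ∀ i' j' : Fin N, ∀ s' ∈ Set.Icc (t0 - S.τbar) t0,
        ∀ u' ∈ Set.Icc (t0 - S.τbar) t0, ‖S.v i' s' - S.v j' u'‖ ≤ sSup Dset := by
      intro i' j' s' hs' u' hu'
      exact le_csSup hDbdd ⟨i', j', s', hs', u', hu', rfl⟩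
    have hD0 : 0 ≤ sSup Dset := by
      have := hDmem i0 i0 t0 ht0I t0 ht0I
      simpa using this
    -- M w
    set Mset : EuclideanSpace ℝ (Fin d) → Set ℝ := fun w =>
      {r | ∃ i' : Fin N, ∃ s' ∈ Set.Icc (t0 - S.τbar) t0, r = ⟪w, S.v i' s'⟫} with hMset
    have hMne : ∀ w, (Mset w).Nonempty := fun w => ⟨⟪w, S.v i0 t0⟫, i0, t0, ht0I, rfl⟩
    have hMbdd : ∀ w, BddAbove (Mset w) := by
      intro w
      refine ⟨‖w‖ * C, ?_⟩
      rintro r ⟨i', s', hs', rfl⟩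
      exact (real_inner_le_norm _ _).trans (mul_le_mul_of_nonneg_left (hC i' s' hs') (norm_nonneg w))
    set Mv : EuclideanSpace ℝ (Fin d) → ℝ := fun w => sSup (Mset w) with hMv
    have hMle : ∀ w, ∀ i' : Fin N, ∀ s' ∈ Set.Icc (t0 - S.τbar) t0, ⟪w, S.v i' s'⟫ ≤ Mv w :=
      fun w i' s' hs' => le_csSup (hMbdd w) ⟨i', s', hs', rfl⟩
    have hkey : ∀ w, ∀ i' : Fin N, ∀ s' : ℝ, t0 - S.τbar ≤ s' → ⟪w, S.v i' s'⟫ ≤ Mv w :=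
      fun w => cs_key S hN t0 ht0 w (Mv w) (fun i' u' hu' => hMle w i' u' hu')
    have hMD : ∀ w, Mv w + Mv (-w) ≤ ‖w‖ * sSup Dset := by
      intro w
      have h1 : Mv (-w) ≤ ‖w‖ * sSup Dset - Mv w := by
        apply csSup_le (hMne _)
        rintro r ⟨j', u', hu', rfl⟩
        have h2 : Mv w ≤ ‖w‖ * sSup Dset - ⟪-w, S.v j' u'⟫ := by
          apply csSup_le (hMne _)
          rintro r' ⟨i', s', hs', rfl⟩
          have hinner : ⟪w, S.v i' s'⟫ + ⟪-w, S.v j' u'⟫ = ⟪w, S.v i' s' - S.v j' u'⟫ := by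
            rw [inner_neg_left, inner_sub_right]; ring
          have hcs : ⟪w, S.v i' s' - S.v j' u'⟫ ≤ ‖w‖ * ‖S.v i' s' - S.v j' u'‖ :=
            real_inner_le_norm _ _
          have hd : ‖S.v i' s' - S.v j' u'‖ ≤ sSup Dset := hDmem i' j' s' hs' u' hu'
          have : ⟪w, S.v i' s' - S.v j' u'⟫ ≤ ‖w‖ * sSup Dset :=
            hcs.trans (mul_le_mul_of_nonneg_left hd (norm_nonneg w))
          linarith
        linarith
      linarith
    -- put it together
    set z : EuclideanSpace ℝ (Fin d) := S.v i s - S.v j u with hz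
    have h1 : ⟪z, S.v i s⟫ ≤ Mv z := hkey z i s hs
    have h2 : ⟪-z, S.v j u⟫ ≤ Mv (-z) := hkey (-z) j u hu
    have h3 : ‖z‖ ^ 2 = ⟪z, S.v i s⟫ + ⟪-z, S.v j u⟫ := by
      rw [inner_neg_left, ← real_inner_self_eq_norm_sq, hz, inner_sub_right]
      ring
    have h4 : ‖z‖ ^ 2 ≤ ‖z‖ * sSup Dset := by
      calc ‖z‖ ^ 2 = ⟪z, S.v i s⟫ + ⟪-z, S.v j u⟫ := h3
        _ ≤ Mv z + Mv (-z) := add_le_add h1 h2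
        _ ≤ ‖z‖ * sSup Dset := hMD z
    rw [hDn]
    rcases eq_or_lt_of_le (norm_nonneg z) with h0 | h0
    · rw [← h0]; exact hD0
    · nlinarith
  refine ⟨hpart1, ?_⟩
  intro n
  have hD0 : 0 ≤ S.Dn T n := by
    have hmem : ((n : ℝ) * T) ∈ Set.Icc ((n : ℝ) * T - S.τbar) ((n : ℝ) * T) :=
      ⟨by linarith [S.τbar_nonneg], le_refl _⟩
    have := hpart1 n i0 i0 ((n : ℝ) * T) ((n : ℝ) * T)
      (by linarith [S.τbar_nonneg]) (by linarith [S.τbar_nonneg])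
    simpa using this
  apply Real.sSup_le _ hD0
  rintro r ⟨i, j, s, hs, u, hu, rfl⟩
  have hstep : (n : ℝ) * T - S.τbar ≤ ((n : ℕ) + 1 : ℝ) * T - S.τbar := by nlinarith
  apply hpart1 n i j s u
  · have := hs.1; push_cast at this ⊢; linarith
  · have := hu.1; push_cast at this ⊢; linarith
end

section
/- Every solution of the delayed Cucker-Smale system satisfies the uniform velocity bound |v_i(t)| ≤ C_0^V for all t ≥ -τ̄ and all i = 1,...,N, where C_0^V := max_{j=1,...,N} max_{s ∈ [-τ̄,0]} |v_j(s)|. -/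
open scoped BigOperators RealInnerProductSpace
open Topology Filter

lemma cs_initial_bddAbove {d N : ℕ} (S : CS d N) :
    BddAbove {r | ∃ j : Fin N, ∃ s ∈ Set.Icc (-S.τbar) 0, r = ‖S.v j s‖} := by
  have hset : {r | ∃ j : Fin N, ∃ s ∈ Set.Icc (-S.τbar) 0, r = ‖S.v j s‖}
      = ⋃ j ∈ (Set.univ : Set (Fin N)), (fun s => ‖S.v j s‖) '' Set.Icc (-S.τbar) 0 := by
    ext r
    simp only [Set.mem_setOf_eq, Set.mem_iUnion, Set.mem_image, Set.mem_univ, exists_true_left]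
    constructor
    · rintro ⟨j, s, hs, rfl⟩; exact ⟨j, s, hs, rfl⟩
    · rintro ⟨j, s, hs, rfl⟩; exact ⟨j, s, hs, rfl⟩
  rw [hset]
  rw [Set.Finite.bddAbove_biUnion Set.finite_univ]
  intro j _
  exact ((isCompact_Icc.image (continuous_norm.comp (S.v_cont j)))).bddAbove

lemma cs_initial_bound {d N : ℕ} (S : CS d N) (j : Fin N) (s : ℝ)
    (hs : s ∈ Set.Icc (-S.τbar) 0) : ‖S.v j s‖ ≤ S.C0V :=
  le_csSup (cs_initial_bddAbove S) ⟨j, s, hs, rfl⟩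

lemma cs_C0V_nonneg {d N : ℕ} (S : CS d N) (hN : 2 ≤ N) : 0 ≤ S.C0V := by
  have hNpos : 0 < N := lt_of_lt_of_le (by norm_num) hN
  have i : Fin N := ⟨0, hNpos⟩
  exact le_trans (norm_nonneg (S.v i 0))
    (cs_initial_bound S i 0 ⟨neg_nonpos.mpr S.τbar_nonneg, le_refl 0⟩)

/-- Key exponential bound: for every ε > 0, velocities are bounded by
`(C0V + ε) * exp (ε t)` for `t ≥ 0`. -/
lemma cs_key_bound {d N : ℕ} (S : CS d N) (hN : 2 ≤ N) (ε : ℝ) (hε : 0 < ε) :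
    ∀ t, 0 ≤ t → ∀ i : Fin N, ‖S.v i t‖ ≤ (S.C0V + ε) * Real.exp (ε * t) := by
  set C := S.C0V with hC
  have hC0 : 0 ≤ C := cs_C0V_nonneg S hN
  set β : ℝ → ℝ := fun t => (C + ε) * Real.exp (ε * t) with hβ
  have hβcont : Continuous β := by fun_prop
  have hβpos : ∀ t, 0 < β t := fun t =>
    mul_pos (by linarith) (Real.exp_pos _)
  have hβmono : Monotone β := by
    intro a b hab
    have : Real.exp (ε * a) ≤ Real.exp (ε * b) :=
      Real.exp_le_exp.mpr (by nlinarith)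
    exact mul_le_mul_of_nonneg_left this (by linarith)
  have hβgeC : ∀ t, 0 ≤ t → C ≤ β t := by
    intro t ht
    have h1 : (1 : ℝ) ≤ Real.exp (ε * t) :=
      Real.one_le_exp (by positivity)
    calc C ≤ C + ε := by linarith
    _ = (C + ε) * 1 := by ring
    _ ≤ β t := mul_le_mul_of_nonneg_left h1 (by linarith)
  by_contra hcon
  push_neg at hcon
  obtain ⟨t0, ht0, i0, hi0⟩ := hcon
  -- the "bad" set
  set E : Set ℝ := {t | t ∈ Set.Icc 0 t0 ∧ ∃ i : Fin N, β t ≤ ‖S.v i t‖} with hE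
  have hEne : E.Nonempty := ⟨t0, ⟨ht0, le_refl t0⟩, i0, le_of_lt hi0⟩
  have hEclosed : IsClosed E := by
    have : E = Set.Icc 0 t0 ∩ ⋃ i : Fin N, {t | β t ≤ ‖S.v i t‖} := by
      ext t
      simp only [hE, Set.mem_setOf_eq, Set.mem_inter_iff, Set.mem_iUnion]
      try tauto
    rw [this]
    exact isClosed_Icc.inter (isClosed_iUnion_of_finite fun i =>
      isClosed_le hβcont (continuous_norm.comp (S.v_cont i)))
  have hEbdd : BddBelow E := ⟨0, fun t ht => ht.1.1⟩
  set ts := sInf E with hts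
  have htsE : ts ∈ E := hEclosed.csInf_mem hEne hEbdd
  have hts0 : 0 ≤ ts := htsE.1.1
  -- strict bound before ts
  have hlow : ∀ s, 0 ≤ s → s < ts → ∀ j : Fin N, ‖S.v j s‖ < β s := by
    intro s hs0 hsts j
    by_contra hcon2
    push_neg at hcon2
    have : s ∈ E := ⟨⟨hs0, le_trans (le_of_lt hsts) htsE.1.2⟩, j, hcon2⟩
    exact absurd (csInf_le hEbdd this) (not_le.mpr hsts)
  -- ts > 0
  have htspos : 0 < ts := by
    rcases lt_or_eq_of_le hts0 with h | h
    · exact h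
    · exfalso
      obtain ⟨i, hi⟩ := htsE.2
      rw [← h] at hi
      have h1 : ‖S.v i 0‖ ≤ C :=
        cs_initial_bound S i 0 ⟨neg_nonpos.mpr S.τbar_nonneg, le_refl 0⟩
      have h2 : β 0 = C + ε := by simp [hβ]
      linarith [hi, h1, h2 ▸ hi]
  -- bound at ts by continuity
  have hle_at : ∀ j : Fin N, ‖S.v j ts‖ ≤ β ts := by
    intro j
    have hne : (𝓝[<] ts).NeBot := nhdsLT_neBot ts
    have h1 : Filter.Tendsto (fun s => ‖S.v j s‖) (𝓝[<] ts) (𝓝 ‖S.v j ts‖) :=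
      ((continuous_norm.comp (S.v_cont j)).tendsto ts).mono_left nhdsWithin_le_nhds
    have h2 : Filter.Tendsto β (𝓝[<] ts) (𝓝 (β ts)) :=
      (hβcont.tendsto ts).mono_left nhdsWithin_le_nhds
    refine le_of_tendsto_of_tendsto h1 h2 ?_
    filter_upwards [Ioo_mem_nhdsLT_of_mem (Set.mem_Ioc.mpr ⟨htspos, le_refl ts⟩)] with s hs
    exact le_of_lt (hlow s (le_of_lt hs.1) hs.2 j)
  -- all values on [-τbar, ts] bounded by β ts
  have hpast : ∀ j : Fin N, ∀ s, -S.τbar ≤ s → s ≤ ts → ‖S.v j s‖ ≤ β ts := by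
    intro j s hs1 hs2
    rcases le_or_gt s 0 with h | h
    · exact le_trans (cs_initial_bound S j s ⟨hs1, h⟩) (hβgeC ts hts0)
    · rcases lt_or_eq_of_le hs2 with h' | h'
      · exact le_trans (le_of_lt (hlow s (le_of_lt h) h' j)) (hβmono (le_of_lt h'))
      · rw [h']; exact hle_at j
  -- the agent attaining the bound
  obtain ⟨i, hige⟩ := htsE.2
  have hieq : ‖S.v i ts‖ = β ts := le_antisymm (hle_at i) hige
  -- derivative setup
  have hv := S.v_deriv i ts htspos
  set D := ∑ j ∈ Finset.univ.erase i,
      (S.α ts * (S.ψ ‖S.x i ts - S.x j (ts - S.τ ts)‖ / ((N : ℝ) - 1))) •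
        (S.v j (ts - S.τ ts) - S.v i ts) with hD
  -- delayed time in range
  have hτ := S.τ_mem ts hts0
  have hdel1 : -S.τbar ≤ ts - S.τ ts := by
    have := hτ.2; linarith
  have hdel2 : ts - S.τ ts ≤ ts := by
    have := hτ.1; linarith
  -- inner product bound
  have hDle : (inner ℝ (S.v i ts) (D) : ℝ) ≤ 0 := by
    rw [hD, inner_sum]
    apply Finset.sum_nonpos
    intro j hj
    rw [real_inner_smul_right]
    have hcoef : 0 ≤ S.α ts * (S.ψ ‖S.x i ts - S.x j (ts - S.τ ts)‖ / ((N : ℝ) - 1)) := by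
      have hα := (S.α_mem ts hts0).1
      have hψ := le_of_lt (S.ψ_pos ‖S.x i ts - S.x j (ts - S.τ ts)‖)
      have hN1 : (0:ℝ) ≤ (N : ℝ) - 1 := by
        have : (2:ℝ) ≤ (N:ℝ) := by exact_mod_cast hN
        linarith
      positivity
    apply mul_nonpos_of_nonneg_of_nonpos hcoef
    rw [inner_sub_right]
    have h1 : (inner ℝ (S.v i ts) (S.v j (ts - S.τ ts)) : ℝ) ≤ ‖S.v i ts‖ * ‖S.v j (ts - S.τ ts)‖ :=
      real_inner_le_norm _ _
    have h2 : ‖S.v j (ts - S.τ ts)‖ ≤ β ts := hpast j _ hdel1 hdel2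
    have h3 : (inner ℝ (S.v i ts) (S.v i ts) : ℝ) = ‖S.v i ts‖ * ‖S.v i ts‖ :=
      real_inner_self_eq_norm_mul_norm _
    rw [h3, hieq]
    have : (inner ℝ (S.v i ts) (S.v j (ts - S.τ ts)) : ℝ) ≤ β ts * β ts := by
      calc (inner ℝ (S.v i ts) (S.v j (ts - S.τ ts)) : ℝ) ≤ ‖S.v i ts‖ * ‖S.v j (ts - S.τ ts)‖ := h1
      _ ≤ β ts * β ts := by
          rw [hieq]
          exact mul_le_mul_of_nonneg_left h2 (le_of_lt (hβpos ts))
    linarith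
  -- derivative of squared norm
  have hg : HasDerivAt (fun t => (inner ℝ (S.v i t) (S.v i t) : ℝ))
      ((inner ℝ (S.v i ts) (D) : ℝ) + (inner ℝ (D) (S.v i ts) : ℝ)) ts := HasDerivAt.inner ℝ hv hv
  -- derivative of β
  have hbder : HasDerivAt β ((Real.exp (ε * ts) * ε) * (C + ε)) ts := by
    have h1 : HasDerivAt (fun t : ℝ => ε * t) (ε * 1) ts := (hasDerivAt_id ts).const_mul ε
    have h2 : HasDerivAt (fun t : ℝ => Real.exp (ε * t)) (Real.exp (ε * ts) * (ε * 1)) ts :=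
      h1.exp
    have h3 := h2.const_mul (C + ε)
    simpa [hβ, mul_comm, mul_assoc, mul_left_comm] using h3
  have hb2 : HasDerivAt (fun t => β t * β t)
      ((Real.exp (ε * ts) * ε) * (C + ε) * β ts + β ts * ((Real.exp (ε * ts) * ε) * (C + ε)))
      ts := hbder.mul hbder
  -- the auxiliary function h
  set m : ℝ := ((inner ℝ (S.v i ts) (D) : ℝ) + (inner ℝ (D) (S.v i ts) : ℝ))
      - ((Real.exp (ε * ts) * ε) * (C + ε) * β ts + β ts * ((Real.exp (ε * ts) * ε) * (C + ε)))
    with hm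
  have hh : HasDerivAt (fun t => (inner ℝ (S.v i t) (S.v i t) : ℝ) - β t * β t) m ts := hg.sub hb2
  -- h ≤ 0 on [0, ts], h ts = 0
  have hhle : ∀ s, 0 ≤ s → s ≤ ts → (inner ℝ (S.v i s) (S.v i s) : ℝ) - β s * β s ≤ 0 := by
    intro s hs1 hs2
    have h1 : ‖S.v i s‖ ≤ β s := by
      rcases lt_or_eq_of_le hs2 with h' | h'
      · exact le_of_lt (hlow s hs1 h' i)
      · rw [h']; exact le_trans (hle_at i) (le_of_eq rfl)
    have h3 : (inner ℝ (S.v i s) (S.v i s) : ℝ) = ‖S.v i s‖ * ‖S.v i s‖ :=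
      real_inner_self_eq_norm_mul_norm _
    rw [h3]
    nlinarith [norm_nonneg (S.v i s), hβpos s]
  have hh0 : (inner ℝ (S.v i ts) (S.v i ts) : ℝ) - β ts * β ts = 0 := by
    rw [real_inner_self_eq_norm_mul_norm, hieq]; ring
  -- m ≥ 0 since ts is a max of h on the left
  have hmge : 0 ≤ m := by
    have hslope := hasDerivAt_iff_tendsto_slope.mp hh
    have hslope' : Filter.Tendsto (slope (fun t => (inner ℝ (S.v i t) (S.v i t) : ℝ) - β t * β t) ts)
        (𝓝[<] ts) (𝓝 m) :=
      hslope.mono_left (nhdsWithin_mono ts fun x hx => ne_of_lt hx)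
    have hne : (𝓝[<] ts).NeBot := nhdsLT_neBot ts
    refine ge_of_tendsto hslope' ?_
    filter_upwards [Ioo_mem_nhdsLT_of_mem (Set.mem_Ioc.mpr ⟨htspos, le_refl ts⟩)] with s hs
    have h1 : (inner ℝ (S.v i s) (S.v i s) : ℝ) - β s * β s ≤ 0 := hhle s (le_of_lt hs.1) (le_of_lt hs.2)
    rw [slope_def_field]
    rw [hh0]
    have hden : s - ts < 0 := by linarith [hs.2]
    have h2 : (s - ts)⁻¹ < 0 := inv_lt_zero.mpr hden
    rw [div_eq_mul_inv]
    nlinarith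
  -- but m < 0
  have hDle2 : (inner ℝ (D) (S.v i ts) : ℝ) ≤ 0 := by rwa [real_inner_comm]
  have hpos : 0 < (Real.exp (ε * ts) * ε) * (C + ε) * β ts := by
    have := hβpos ts
    have := Real.exp_pos (ε * ts)
    positivity
  rw [hm] at hmge
  linarith

/-- uniform bound on the agents' velocities. -/
theorem cs_velocity_bound {d N : ℕ} (S : CS d N) (hN : 2 ≤ N) :
    ∀ i : Fin N, ∀ t, -S.τbar ≤ t → ‖S.v i t‖ ≤ S.C0V := by
  intro i t ht
  rcases le_or_gt t 0 with h | h
  · exact cs_initial_bound S i t ⟨ht, h⟩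
  · -- take the limit ε → 0⁺ of the key bound
    have hkey : ∀ ε : ℝ, 0 < ε → ‖S.v i t‖ ≤ (S.C0V + ε) * Real.exp (ε * t) :=
      fun ε hε => cs_key_bound S hN ε hε t (le_of_lt h) i
    have hne : (𝓝[>] (0:ℝ)).NeBot := nhdsGT_neBot 0
    have htend : Filter.Tendsto (fun ε : ℝ => (S.C0V + ε) * Real.exp (ε * t))
        (𝓝[>] (0:ℝ)) (𝓝 S.C0V) := by
      have hcont : Continuous (fun ε : ℝ => (S.C0V + ε) * Real.exp (ε * t)) := by fun_prop
      have := (hcont.tendsto 0).mono_left (nhdsWithin_le_nhds (s := Set.Ioi (0:ℝ)))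
      simpa using this
    refine ge_of_tendsto htend ?_
    filter_upwards [self_mem_nhdsWithin] with ε hε
    exact hkey ε hε
end

section
/- For all i, j = 1,...,N, every unit vector v ∈ R^d and every n ∈ N_0, the inequality ⟨v_i(t) - v_j(t), v⟩ ≤ e^{-K(t - t̄)} ⟨v_i(t̄) - v_j(t̄), v⟩ + (1 - e^{-K(t - t̄)}) D_n holds for all t ≥ t̄ ≥ nT, where K = ‖ψ‖_∞ and D_n = max_{i,j} max_{s,t ∈ [nT - τ̄, nT]} |v_i(s) - v_j(t)|. -/
open scoped BigOperators RealInnerProductSpace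
open Topology Filter

namespace CS
variable {d N : ℕ}

lemma hasDerivAt_inner (S : CS d N) (k : Fin N) (w : EuclideanSpace ℝ (Fin d)) {t : ℝ}
    (ht : 0 < t) :
    HasDerivAt (fun s => ⟪S.v k s, w⟫)
      (∑ l ∈ Finset.univ.erase k,
        (S.α t * (S.ψ ‖S.x k t - S.x l (t - S.τ t)‖ / ((N : ℝ) - 1))) *
          (⟪S.v l (t - S.τ t), w⟫ - ⟪S.v k t, w⟫)) t := by
  have h := (S.v_deriv k t ht).inner ℝ (hasDerivAt_const t w)
  simp only [inner_zero_right, zero_add] at h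
  simp only [sum_inner, real_inner_smul_left, inner_sub_left] at h
  exact h

lemma inner_le_of_le (S : CS d N) (hN : 2 ≤ N) (w : EuclideanSpace ℝ (Fin d))
    (b M : ℝ) (hb : 0 ≤ b)
    (hM : ∀ k : Fin N, ∀ s ∈ Set.Icc (b - S.τbar) b, ⟪S.v k s, w⟫ ≤ M) :
    ∀ t, b ≤ t → ∀ k, ⟪S.v k t, w⟫ ≤ M := by
  have key : ∀ ε > (0:ℝ), ∀ u, b ≤ u → ∀ k, ⟪S.v k u, w⟫ < M + ε * Real.exp (u - b) := by
    intro ε hε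
    by_contra hcon
    push_neg at hcon
    obtain ⟨u₁, hu₁, k₁, hk₁⟩ := hcon
    set Sset : Set ℝ := {u | b ≤ u ∧ ∃ k, M + ε * Real.exp (u - b) ≤ ⟪S.v k u, w⟫} with hSset
    have hne : Sset.Nonempty := ⟨u₁, hu₁, k₁, hk₁⟩
    have hbdd : BddBelow Sset := ⟨b, fun u hu => hu.1⟩
    have hclosed : IsClosed Sset := by
      have : Sset = {u | b ≤ u} ∩ ⋃ k : Fin N,
          {u | M + ε * Real.exp (u - b) ≤ ⟪S.v k u, w⟫} := by
        ext u; simp [hSset, Set.mem_iUnion]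
      rw [this]
      refine (isClosed_le continuous_const continuous_id).inter
        (isClosed_iUnion_of_finite fun k => isClosed_le (by fun_prop) ?_)
      exact (S.v_cont k).inner continuous_const
    set t0 := sInf Sset with ht0
    have ht0mem : t0 ∈ Sset := hclosed.csInf_mem hne hbdd
    have hbt0 : b ≤ t0 := ht0mem.1
    have hlt : b < t0 := by
      rcases eq_or_lt_of_le hbt0 with h | h
      · exfalso
        obtain ⟨k', hk'⟩ := ht0mem.2
        have h1 : ⟪S.v k' t0, w⟫ ≤ M := by
          refine hM k' t0 ⟨?_, h.symm.le⟩
          have := S.τbar_nonneg; linarith [h.symm.le]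
        rw [← h, sub_self, Real.exp_zero, mul_one] at hk'
        rw [← h] at h1
        linarith
      · exact h
    have ht0pos : 0 < t0 := lt_of_le_of_lt hb hlt
    -- argmax at t0
    haveI : Nonempty (Fin N) := ⟨⟨0, by omega⟩⟩
    obtain ⟨k0, hk0⟩ := Finite.exists_max (fun l : Fin N => ⟪S.v l t0, w⟫)
    have ht0ge : M + ε * Real.exp (t0 - b) ≤ ⟪S.v k0 t0, w⟫ := by
      obtain ⟨k', hk'⟩ := ht0mem.2
      exact le_trans hk' (hk0 k')
    have hbefore : ∀ s, b ≤ s → s < t0 → ∀ l, ⟪S.v l s, w⟫ < M + ε * Real.exp (s - b) := by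
      intro s hs1 hs2 l
      by_contra hcon2
      push_neg at hcon2
      exact absurd (csInf_le hbdd ⟨hs1, l, hcon2⟩) (not_le.2 hs2)
    -- delayed bound
    have hτ := S.τ_mem t0 ht0pos.le
    have hs'le : t0 - S.τ t0 ≤ t0 := by linarith [hτ.1]
    have hexp1 : (1:ℝ) ≤ Real.exp (t0 - b) := Real.one_le_exp (by linarith)
    have hdel : ∀ l, ⟪S.v l (t0 - S.τ t0), w⟫ ≤ ⟪S.v k0 t0, w⟫ := by
      intro l
      rcases eq_or_lt_of_le hs'le with h | h
      · rw [h]; exact hk0 l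
      · rcases le_or_gt (t0 - S.τ t0) b with h2 | h2
        · have h3 : ⟪S.v l (t0 - S.τ t0), w⟫ ≤ M := hM l _ ⟨by linarith [hτ.2], h2⟩
          nlinarith
        · have h3 := hbefore _ h2.le h l
          have h4 : Real.exp (t0 - S.τ t0 - b) ≤ Real.exp (t0 - b) :=
            Real.exp_le_exp.2 (by linarith)
          nlinarith
    -- derivative at t0
    have hD := S.hasDerivAt_inner k0 w ht0pos
    have hN1 : (0:ℝ) < (N : ℝ) - 1 := by
      have : (2:ℝ) ≤ (N:ℝ) := by exact_mod_cast hN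
      linarith
    have hDle : (∑ l ∈ Finset.univ.erase k0,
        (S.α t0 * (S.ψ ‖S.x k0 t0 - S.x l (t0 - S.τ t0)‖ / ((N : ℝ) - 1))) *
          (⟪S.v l (t0 - S.τ t0), w⟫ - ⟪S.v k0 t0, w⟫)) ≤ 0 := by
      refine Finset.sum_nonpos fun l _ => mul_nonpos_of_nonneg_of_nonpos ?_ ?_
      · exact mul_nonneg (S.α_mem t0 ht0pos.le).1
          (div_nonneg (S.ψ_pos _).le hN1.le)
      · exact sub_nonpos.2 (hdel l)
    have hB : HasDerivAt (fun u => M + ε * Real.exp (u - b)) (ε * Real.exp (t0 - b)) t0 := by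
      have h1 : HasDerivAt (fun u : ℝ => u - b) 1 t0 := (hasDerivAt_id t0).sub_const b
      have h2 := (Real.hasDerivAt_exp (t0 - b)).comp t0 h1
      simpa using (h2.const_mul ε).const_add M
    have hG := hD.sub hB
    have hslope := hasDerivAt_iff_tendsto_slope.1 hG
    have hge : (0:ℝ) ≤ (∑ l ∈ Finset.univ.erase k0,
        (S.α t0 * (S.ψ ‖S.x k0 t0 - S.x l (t0 - S.τ t0)‖ / ((N : ℝ) - 1))) *
          (⟪S.v l (t0 - S.τ t0), w⟫ - ⟪S.v k0 t0, w⟫)) - ε * Real.exp (t0 - b) := by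
      have hmono : 𝓝[<] t0 ≤ 𝓝[≠] t0 :=
        nhdsWithin_mono t0 fun x hx => ne_of_lt hx
      refine ge_of_tendsto (hslope.mono_left hmono) ?_
      filter_upwards [Ioo_mem_nhdsLT_of_mem (Set.mem_Ioc.2 ⟨hlt, le_refl t0⟩)] with s hs
      have h1 : ⟪S.v k0 s, w⟫ - (M + ε * Real.exp (s - b)) ≤ 0 := by
        have := hbefore s hs.1.le hs.2 k0; linarith
      have h2 : (0:ℝ) ≤ ⟪S.v k0 t0, w⟫ - (M + ε * Real.exp (t0 - b)) := by linarith
      rw [slope_def_field]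
      rw [div_nonneg_iff]
      right
      constructor
      · simp only [Pi.sub_apply]; linarith
      · linarith [hs.2]
    nlinarith [mul_pos hε (Real.exp_pos (t0 - b))]
  intro t ht k
  refine le_of_forall_pos_le_add fun ε hε => ?_
  have h := key (ε / Real.exp (t - b)) (div_pos hε (Real.exp_pos _)) t ht k
  rw [div_mul_cancel₀ _ (ne_of_gt (Real.exp_pos _))] at h
  exact h.le

end CS
/-- exponential interpolation estimate on directional velocity differences. -/
theorem cs_directional_estimate {d N : ℕ} (S : CS d N) (hN : 2 ≤ N)
    (T : ℝ) (hT : 0 < T) (hTτ : S.τbar ≤ T)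
    (i j : Fin N) (w : EuclideanSpace ℝ (Fin d)) (hw : ‖w‖ = 1) (n : ℕ)
    (tb t : ℝ) (h1 : (n : ℝ) * T ≤ tb) (h2 : tb ≤ t) :
    ⟪S.v i t - S.v j t, w⟫ ≤
      Real.exp (-S.K * (t - tb)) * ⟪S.v i tb - S.v j tb, w⟫ +
        (1 - Real.exp (-S.K * (t - tb))) * S.Dn T n := by
  have hτb := S.τbar_nonneg
  have hb0 : (0:ℝ) ≤ (n:ℝ) * T := mul_nonneg (Nat.cast_nonneg n) hT.le
  have hab : (n:ℝ) * T - S.τbar ≤ (n:ℝ) * T := by linarith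
  have hIcc : (Set.Icc ((n:ℝ) * T - S.τbar) ((n:ℝ)*T)).Nonempty := Set.nonempty_Icc.2 hab
  haveI : Nonempty (Fin N) := ⟨⟨0, by omega⟩⟩
  -- extrema of directional velocities on the initial interval
  have hmax : ∀ k : Fin N, ∃ s ∈ Set.Icc ((n:ℝ) * T - S.τbar) ((n:ℝ)*T),
      ∀ u ∈ Set.Icc ((n:ℝ) * T - S.τbar) ((n:ℝ)*T), ⟪S.v k u, w⟫ ≤ ⟪S.v k s, w⟫ := by
    intro k
    obtain ⟨s, hs, hm⟩ := isCompact_Icc.exists_isMaxOn (f := fun u => ⟪S.v k u, w⟫) hIcc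
      (((S.v_cont k).inner continuous_const).continuousOn)
    exact ⟨s, hs, fun u hu => hm hu⟩
  have hmin : ∀ k : Fin N, ∃ s ∈ Set.Icc ((n:ℝ) * T - S.τbar) ((n:ℝ)*T),
      ∀ u ∈ Set.Icc ((n:ℝ) * T - S.τbar) ((n:ℝ)*T), ⟪S.v k s, w⟫ ≤ ⟪S.v k u, w⟫ := by
    intro k
    obtain ⟨s, hs, hm⟩ := isCompact_Icc.exists_isMinOn (f := fun u => ⟪S.v k u, w⟫) hIcc
      (((S.v_cont k).inner continuous_const).continuousOn)
    exact ⟨s, hs, fun u hu => hm hu⟩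
  choose σ hσ1 hσ2 using hmax
  choose μ hμ1 hμ2 using hmin
  obtain ⟨k0, hk0⟩ := Finite.exists_max (fun k : Fin N => ⟪S.v k (σ k), w⟫)
  obtain ⟨l0, hl0⟩ := Finite.exists_min (fun k : Fin N => ⟪S.v k (μ k), w⟫)
  set M : ℝ := ⟪S.v k0 (σ k0), w⟫ with hMdef
  set m : ℝ := ⟪S.v l0 (μ l0), w⟫ with hmdef
  have hMub : ∀ k, ∀ s ∈ Set.Icc ((n:ℝ) * T - S.τbar) ((n:ℝ)*T), ⟪S.v k s, w⟫ ≤ M :=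
    fun k s hs => le_trans (hσ2 k s hs) (hk0 k)
  have hmlb : ∀ k, ∀ s ∈ Set.Icc ((n:ℝ) * T - S.τbar) ((n:ℝ)*T), m ≤ ⟪S.v k s, w⟫ :=
    fun k s hs => le_trans (hl0 k) (hμ2 k s hs)
  -- invariance
  have hup := S.inner_le_of_le hN w ((n:ℝ)*T) M hb0 hMub
  have hlow : ∀ t', (n:ℝ)*T ≤ t' → ∀ k, m ≤ ⟪S.v k t', w⟫ := by
    have h := S.inner_le_of_le hN (-w) ((n:ℝ)*T) (-m) hb0 (fun k s hs => by
      rw [inner_neg_right]; linarith [hmlb k s hs])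
    intro t' ht' k
    have h2 := h t' ht' k
    rw [inner_neg_right] at h2; linarith
  have hup' : ∀ t', (n:ℝ) * T - S.τbar ≤ t' → ∀ k, ⟪S.v k t', w⟫ ≤ M := by
    intro t' ht' k
    rcases le_or_gt t' ((n:ℝ)*T) with h | h
    · exact hMub k t' ⟨ht', h⟩
    · exact hup t' h.le k
  have hlow' : ∀ t', (n:ℝ) * T - S.τbar ≤ t' → ∀ k, m ≤ ⟪S.v k t', w⟫ := by
    intro t' ht' k
    rcases le_or_gt t' ((n:ℝ)*T) with h | h
    · exact hmlb k t' ⟨ht', h⟩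
    · exact hlow t' h.le k
  -- K facts
  have hKψ : ∀ r, S.ψ r ≤ S.K := fun r => le_csSup S.ψ_bdd ⟨r, rfl⟩
  have hK0 : 0 ≤ S.K := le_trans (S.ψ_pos 0).le (hKψ 0)
  have hN1 : (0:ℝ) < (N:ℝ) - 1 := by
    have : (2:ℝ) ≤ (N:ℝ) := by exact_mod_cast hN
    linarith
  have hcnn : ∀ (p l : Fin N) (x : ℝ), 0 ≤ x →
      0 ≤ S.α x * (S.ψ ‖S.x p x - S.x l (x - S.τ x)‖ / ((N:ℝ)-1)) := fun p l x hx =>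
    mul_nonneg (S.α_mem x hx).1 (div_nonneg (S.ψ_pos _).le hN1.le)
  have hsum : ∀ (p : Fin N) (x : ℝ), 0 ≤ x →
      (∑ l ∈ Finset.univ.erase p,
        S.α x * (S.ψ ‖S.x p x - S.x l (x - S.τ x)‖ / ((N:ℝ)-1))) ≤ S.K := by
    intro p x hx
    have hcard : ((Finset.univ.erase p).card : ℝ) = (N:ℝ) - 1 := by
      rw [Finset.card_erase_of_mem (Finset.mem_univ p), Finset.card_univ, Fintype.card_fin]
      rw [Nat.cast_sub (by omega), Nat.cast_one]
    calc (∑ l ∈ Finset.univ.erase p,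
            S.α x * (S.ψ ‖S.x p x - S.x l (x - S.τ x)‖ / ((N:ℝ)-1)))
        ≤ ∑ _l ∈ Finset.univ.erase p, S.K / ((N:ℝ)-1) := by
          refine Finset.sum_le_sum fun l _ => ?_
          have h1 : S.α x * (S.ψ ‖S.x p x - S.x l (x - S.τ x)‖ / ((N:ℝ)-1))
              ≤ 1 * (S.K / ((N:ℝ)-1)) := by
            refine mul_le_mul (S.α_mem x hx).2 ?_ (div_nonneg (S.ψ_pos _).le hN1.le)
              zero_le_one
            gcongr
            exact hKψ _
          linarith
      _ = S.K := by
          rw [Finset.sum_const, nsmul_eq_mul, hcard]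
          field_simp
  -- the comparison function
  set Φ : ℝ → ℝ := fun u => Real.exp (S.K * u) *
    ((⟪S.v i u, w⟫ - ⟪S.v j u, w⟫) - (M - m)) with hΦdef
  have hΦderiv : ∀ x : ℝ, 0 < x → HasDerivAt Φ
      (S.K * Real.exp (S.K * x) * ((⟪S.v i x, w⟫ - ⟪S.v j x, w⟫) - (M - m)) +
        Real.exp (S.K * x) *
          ((∑ l ∈ Finset.univ.erase i,
            (S.α x * (S.ψ ‖S.x i x - S.x l (x - S.τ x)‖ / ((N : ℝ) - 1))) *
              (⟪S.v l (x - S.τ x), w⟫ - ⟪S.v i x, w⟫)) -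
           (∑ l ∈ Finset.univ.erase j,
            (S.α x * (S.ψ ‖S.x j x - S.x l (x - S.τ x)‖ / ((N : ℝ) - 1))) *
              (⟪S.v l (x - S.τ x), w⟫ - ⟪S.v j x, w⟫)))) x := by
    intro x hx
    have he : HasDerivAt (fun u : ℝ => Real.exp (S.K * u)) (S.K * Real.exp (S.K * x)) x := by
      have h1 : HasDerivAt (fun u : ℝ => S.K * u) S.K x := by
        simpa using (hasDerivAt_id x).const_mul S.K
      have h2 := (Real.hasDerivAt_exp (S.K * x)).comp x h1
      simpa [Function.comp_def, mul_comm] using h2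
    have hin : HasDerivAt (fun u : ℝ => (⟪S.v i u, w⟫ - ⟪S.v j u, w⟫) - (M - m))
        ((∑ l ∈ Finset.univ.erase i,
            (S.α x * (S.ψ ‖S.x i x - S.x l (x - S.τ x)‖ / ((N : ℝ) - 1))) *
              (⟪S.v l (x - S.τ x), w⟫ - ⟪S.v i x, w⟫)) -
         (∑ l ∈ Finset.univ.erase j,
            (S.α x * (S.ψ ‖S.x j x - S.x l (x - S.τ x)‖ / ((N : ℝ) - 1))) *
              (⟪S.v l (x - S.τ x), w⟫ - ⟪S.v j x, w⟫))) x :=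
      ((S.hasDerivAt_inner i w hx).sub (S.hasDerivAt_inner j w hx)).sub_const _
    exact he.mul hin
  have hΦcont : Continuous Φ := by
    refine (Real.continuous_exp.comp (continuous_const.mul continuous_id)).mul ?_
    exact (((S.v_cont i).inner continuous_const).sub
      ((S.v_cont j).inner continuous_const)).sub continuous_const
  have hanti : AntitoneOn Φ (Set.Icc tb t) := by
    refine antitoneOn_of_deriv_nonpos (convex_Icc tb t) hΦcont.continuousOn ?_ ?_
    · intro x hx
      rw [interior_Icc] at hx
      have hx0 : 0 < x := lt_of_le_of_lt (le_trans hb0 h1) hx.1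
      exact ((hΦderiv x hx0).differentiableAt).differentiableWithinAt
    · intro x hx
      rw [interior_Icc] at hx
      have hx0 : 0 < x := lt_of_le_of_lt (le_trans hb0 h1) hx.1
      have hxb : (n:ℝ) * T ≤ x := le_trans h1 hx.1.le
      rw [(hΦderiv x hx0).deriv]
      -- delayed time is in the invariance region
      have hτx := S.τ_mem x hx0.le
      have hs' : (n:ℝ) * T - S.τbar ≤ x - S.τ x := by linarith [hτx.2]
      have hFi : ⟪S.v i x, w⟫ ≤ M := hup' x (by linarith) i
      have hFj : m ≤ ⟪S.v j x, w⟫ := hlow' x (by linarith) j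
      have hDi : (∑ l ∈ Finset.univ.erase i,
            (S.α x * (S.ψ ‖S.x i x - S.x l (x - S.τ x)‖ / ((N : ℝ) - 1))) *
              (⟪S.v l (x - S.τ x), w⟫ - ⟪S.v i x, w⟫)) ≤ S.K * (M - ⟪S.v i x, w⟫) := by
        calc (∑ l ∈ Finset.univ.erase i,
            (S.α x * (S.ψ ‖S.x i x - S.x l (x - S.τ x)‖ / ((N : ℝ) - 1))) *
              (⟪S.v l (x - S.τ x), w⟫ - ⟪S.v i x, w⟫))
            ≤ ∑ l ∈ Finset.univ.erase i,
              (S.α x * (S.ψ ‖S.x i x - S.x l (x - S.τ x)‖ / ((N : ℝ) - 1))) *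
                (M - ⟪S.v i x, w⟫) := by
              refine Finset.sum_le_sum fun l _ => ?_
              refine mul_le_mul_of_nonneg_left ?_ (hcnn i l x hx0.le)
              have := hup' (x - S.τ x) hs' l
              linarith
          _ = (∑ l ∈ Finset.univ.erase i,
                S.α x * (S.ψ ‖S.x i x - S.x l (x - S.τ x)‖ / ((N : ℝ) - 1))) *
                (M - ⟪S.v i x, w⟫) := by rw [← Finset.sum_mul]
          _ ≤ S.K * (M - ⟪S.v i x, w⟫) := by
              refine mul_le_mul_of_nonneg_right (hsum i x hx0.le) ?_
              linarith
      have hDj : S.K * (m - ⟪S.v j x, w⟫) ≤ (∑ l ∈ Finset.univ.erase j,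
            (S.α x * (S.ψ ‖S.x j x - S.x l (x - S.τ x)‖ / ((N : ℝ) - 1))) *
              (⟪S.v l (x - S.τ x), w⟫ - ⟪S.v j x, w⟫)) := by
        calc S.K * (m - ⟪S.v j x, w⟫)
            ≤ (∑ l ∈ Finset.univ.erase j,
                S.α x * (S.ψ ‖S.x j x - S.x l (x - S.τ x)‖ / ((N : ℝ) - 1))) *
                (m - ⟪S.v j x, w⟫) := by
              refine mul_le_mul_of_nonpos_right (hsum j x hx0.le) ?_
              linarith
          _ = ∑ l ∈ Finset.univ.erase j,
              (S.α x * (S.ψ ‖S.x j x - S.x l (x - S.τ x)‖ / ((N : ℝ) - 1))) *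
                (m - ⟪S.v j x, w⟫) := by rw [Finset.sum_mul]
          _ ≤ ∑ l ∈ Finset.univ.erase j,
              (S.α x * (S.ψ ‖S.x j x - S.x l (x - S.τ x)‖ / ((N : ℝ) - 1))) *
                (⟪S.v l (x - S.τ x), w⟫ - ⟪S.v j x, w⟫) := by
              refine Finset.sum_le_sum fun l _ => ?_
              refine mul_le_mul_of_nonneg_left ?_ (hcnn j l x hx0.le)
              have := hlow' (x - S.τ x) hs' l
              linarith
      have hkey : S.K * ((⟪S.v i x, w⟫ - ⟪S.v j x, w⟫) - (M - m)) +
          ((∑ l ∈ Finset.univ.erase i,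
            (S.α x * (S.ψ ‖S.x i x - S.x l (x - S.τ x)‖ / ((N : ℝ) - 1))) *
              (⟪S.v l (x - S.τ x), w⟫ - ⟪S.v i x, w⟫)) -
           (∑ l ∈ Finset.univ.erase j,
            (S.α x * (S.ψ ‖S.x j x - S.x l (x - S.τ x)‖ / ((N : ℝ) - 1))) *
              (⟪S.v l (x - S.τ x), w⟫ - ⟪S.v j x, w⟫))) ≤ 0 := by nlinarith [hDi, hDj]
      have hrw : S.K * Real.exp (S.K * x) * ((⟪S.v i x, w⟫ - ⟪S.v j x, w⟫) - (M - m)) +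
          Real.exp (S.K * x) *
            ((∑ l ∈ Finset.univ.erase i,
              (S.α x * (S.ψ ‖S.x i x - S.x l (x - S.τ x)‖ / ((N : ℝ) - 1))) *
                (⟪S.v l (x - S.τ x), w⟫ - ⟪S.v i x, w⟫)) -
             (∑ l ∈ Finset.univ.erase j,
              (S.α x * (S.ψ ‖S.x j x - S.x l (x - S.τ x)‖ / ((N : ℝ) - 1))) *
                (⟪S.v l (x - S.τ x), w⟫ - ⟪S.v j x, w⟫))) =
          Real.exp (S.K * x) * (S.K * ((⟪S.v i x, w⟫ - ⟪S.v j x, w⟫) - (M - m)) +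
            ((∑ l ∈ Finset.univ.erase i,
              (S.α x * (S.ψ ‖S.x i x - S.x l (x - S.τ x)‖ / ((N : ℝ) - 1))) *
                (⟪S.v l (x - S.τ x), w⟫ - ⟪S.v i x, w⟫)) -
             (∑ l ∈ Finset.univ.erase j,
              (S.α x * (S.ψ ‖S.x j x - S.x l (x - S.τ x)‖ / ((N : ℝ) - 1))) *
                (⟪S.v l (x - S.τ x), w⟫ - ⟪S.v j x, w⟫)))) := by ring
      rw [hrw]
      exact mul_nonpos_of_nonneg_of_nonpos (Real.exp_pos _).le hkey
  -- use antitonicity between tb and t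
  have hΦle : Φ t ≤ Φ tb := hanti ⟨le_rfl, h2⟩ ⟨h2, le_rfl⟩ h2
  rw [hΦdef] at hΦle
  simp only [] at hΦle
  -- algebra to conclude
  have e1 : Real.exp (-(S.K * t)) * Real.exp (S.K * t) = 1 := by
    rw [← Real.exp_add]; simp
  have e2 : Real.exp (-(S.K * t)) * Real.exp (S.K * tb) = Real.exp (-S.K * (t - tb)) := by
    rw [← Real.exp_add]; congr 1; ring
  have h3 := mul_le_mul_of_nonneg_left hΦle (Real.exp_pos (-(S.K * t))).le
  rw [← mul_assoc, ← mul_assoc, e1, e2, one_mul] at h3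
  -- bound M - m by Dn
  have hbd : ∀ k : Fin N, ∃ C, ∀ s ∈ Set.Icc ((n:ℝ) * T - S.τbar) ((n:ℝ)*T), ‖S.v k s‖ ≤ C :=
    fun k => isCompact_Icc.exists_bound_of_continuousOn (S.v_cont k).continuousOn
  choose C hC using hbd
  have hDbdd : BddAbove {r | ∃ i j : Fin N,
      ∃ s ∈ Set.Icc ((n : ℝ) * T - S.τbar) ((n : ℝ) * T),
      ∃ u ∈ Set.Icc ((n : ℝ) * T - S.τbar) ((n : ℝ) * T), r = ‖S.v i s - S.v j u‖} := by
    refine ⟨(∑ k, |C k|) + (∑ k, |C k|), ?_⟩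
    rintro r ⟨i', j', s, hs, u, hu, rfl⟩
    have hb1 : C i' ≤ ∑ k, |C k| :=
      le_trans (le_abs_self _) (Finset.single_le_sum (f := fun k => |C k|)
        (fun k _ => abs_nonneg _) (Finset.mem_univ i'))
    have hb2 : C j' ≤ ∑ k, |C k| :=
      le_trans (le_abs_self _) (Finset.single_le_sum (f := fun k => |C k|)
        (fun k _ => abs_nonneg _) (Finset.mem_univ j'))
    calc ‖S.v i' s - S.v j' u‖ ≤ ‖S.v i' s‖ + ‖S.v j' u‖ := norm_sub_le _ _
      _ ≤ (∑ k, |C k|) + (∑ k, |C k|) := by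
          gcongr
          · exact le_trans (hC i' s hs) hb1
          · exact le_trans (hC j' u hu) hb2
  have hΔDn : M - m ≤ S.Dn T n := by
    have hΔ : M - m ≤ ‖S.v k0 (σ k0) - S.v l0 (μ l0)‖ := by
      rw [hMdef, hmdef, ← inner_sub_left]
      calc ⟪S.v k0 (σ k0) - S.v l0 (μ l0), w⟫
          ≤ ‖S.v k0 (σ k0) - S.v l0 (μ l0)‖ * ‖w‖ := real_inner_le_norm _ _
        _ = ‖S.v k0 (σ k0) - S.v l0 (μ l0)‖ := by rw [hw, mul_one]
    refine le_trans hΔ ?_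
    exact le_csSup hDbdd ⟨k0, l0, σ k0, hσ1 k0, μ l0, hμ1 l0, rfl⟩
  have hE1 : Real.exp (-S.K * (t - tb)) ≤ 1 := by
    rw [Real.exp_le_one_iff]
    nlinarith
  have hfin : (1 - Real.exp (-S.K * (t - tb))) * (M - m) ≤
      (1 - Real.exp (-S.K * (t - tb))) * S.Dn T n :=
    mul_le_mul_of_nonneg_left hΔDn (by linarith)
  rw [inner_sub_left, inner_sub_left]
  nlinarith [h3, hfin]
end

section
/- For all n ∈ N_0, the generalized velocity diameters satisfy D_{n+1} ≤ e^{-KT} d_V(nT) + (1 - e^{-KT}) D_n, where d_V(t) = max_{i,j} |v_i(t) - v_j(t)|, D_n = max_{i,j} max_{s,t ∈ [nT - τ̄, nT]} |v_i(s) - v_j(t)|, and K = ‖ψ‖_∞. -/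
open scoped BigOperators RealInnerProductSpace

section Aux
open Set Filter Topology

variable {d N : ℕ}

/-- component of velocity along a direction -/
noncomputable def CS.h (S : CS d N) (e : EuclideanSpace ℝ (Fin d)) (i : Fin N) (t : ℝ) : ℝ :=
  ⟪S.v i t, e⟫

lemma CS.h_cont (S : CS d N) (e : EuclideanSpace ℝ (Fin d)) (i : Fin N) :
    Continuous (S.h e i) := (S.v_cont i).inner continuous_const

/-- the coupling coefficients -/
noncomputable def CS.coef (S : CS d N) (i j : Fin N) (t : ℝ) : ℝ :=
  S.α t * (S.ψ ‖S.x i t - S.x j (t - S.τ t)‖ / ((N : ℝ) - 1))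

lemma CS.K_pos (S : CS d N) : 0 < S.K :=
  lt_of_lt_of_le (S.ψ_pos 0) (le_csSup S.ψ_bdd ⟨0, rfl⟩)

lemma CS.ψ_le_K (S : CS d N) (r : ℝ) : S.ψ r ≤ S.K := le_csSup S.ψ_bdd ⟨r, rfl⟩

lemma Nsub_pos (hN : 2 ≤ N) : (0:ℝ) < (N:ℝ) - 1 := by
  have : (2:ℝ) ≤ (N:ℝ) := by exact_mod_cast hN
  linarith

lemma CS.coef_nonneg (S : CS d N) (hN : 2 ≤ N) (i j : Fin N) {t : ℝ} (ht : 0 ≤ t) :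
    0 ≤ S.coef i j t := by
  have hα := (S.α_mem t ht).1
  have hψ := (S.ψ_pos ‖S.x i t - S.x j (t - S.τ t)‖).le
  exact mul_nonneg hα (div_nonneg hψ (Nsub_pos hN).le)

lemma CS.coef_le (S : CS d N) (hN : 2 ≤ N) (i j : Fin N) {t : ℝ} (ht : 0 ≤ t) :
    S.coef i j t ≤ S.K / ((N:ℝ) - 1) := by
  have hα := S.α_mem t ht
  have hψ := S.ψ_le_K ‖S.x i t - S.x j (t - S.τ t)‖
  have hden := Nsub_pos hN
  calc S.coef i j t ≤ 1 * (S.ψ ‖S.x i t - S.x j (t - S.τ t)‖ / ((N:ℝ) - 1)) := by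
        apply mul_le_mul_of_nonneg_right hα.2
        exact div_nonneg (S.ψ_pos _).le hden.le
    _ = S.ψ ‖S.x i t - S.x j (t - S.τ t)‖ / ((N:ℝ) - 1) := one_mul _
    _ ≤ S.K / ((N:ℝ) - 1) := by gcongr

lemma CS.sum_coef_le (S : CS d N) (hN : 2 ≤ N) (i : Fin N) {t : ℝ} (ht : 0 ≤ t) :
    ∑ j ∈ Finset.univ.erase i, S.coef i j t ≤ S.K := by
  have h1 : ∑ j ∈ Finset.univ.erase i, S.coef i j t
      ≤ ∑ _j ∈ Finset.univ.erase i, (S.K / ((N:ℝ) - 1)) :=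
    Finset.sum_le_sum fun j _ => S.coef_le hN i j ht
  refine h1.trans ?_
  rw [Finset.sum_const, Finset.card_erase_of_mem (Finset.mem_univ i), Finset.card_univ,
    Fintype.card_fin, nsmul_eq_mul]
  have hcast : ((N - 1 : ℕ) : ℝ) = (N:ℝ) - 1 := by
    push_cast [Nat.cast_sub (by omega : 1 ≤ N)]; ring
  rw [hcast]
  have hden := Nsub_pos hN
  field_simp
  exact le_refl _

lemma CS.hasDerivAt_h (S : CS d N) (e : EuclideanSpace ℝ (Fin d)) (i : Fin N) {t : ℝ}
    (ht : 0 < t) :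
    HasDerivAt (S.h e i)
      (∑ j ∈ Finset.univ.erase i, S.coef i j t * (S.h e j (t - S.τ t) - S.h e i t)) t := by
  have hv := S.v_deriv i t ht
  have h2 := HasDerivAt.inner ℝ hv (hasDerivAt_const t e)
  simp only [inner_zero_right, zero_add] at h2
  have heq : (⟪(∑ j ∈ Finset.univ.erase i,
        (S.α t * (S.ψ ‖S.x i t - S.x j (t - S.τ t)‖ / ((N : ℝ) - 1))) •
          (S.v j (t - S.τ t) - S.v i t)), e⟫ : ℝ)
      = ∑ j ∈ Finset.univ.erase i, S.coef i j t * (S.h e j (t - S.τ t) - S.h e i t) := by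
    rw [sum_inner]
    refine Finset.sum_congr rfl fun j _ => ?_
    rw [real_inner_smul_left, inner_sub_left]
    rfl
  rw [← heq]
  exact h2

/-- invariance of upper bounds along directions -/
lemma CS.invariance (S : CS d N) (hN : 2 ≤ N) (e : EuclideanSpace ℝ (Fin d))
    {t0 T M : ℝ} (hT : 0 < T) (ht0 : 0 ≤ t0)
    (hM : ∀ j : Fin N, ∀ s ∈ Icc (t0 - S.τbar) t0, S.h e j s ≤ M) :
    ∀ t ∈ Icc t0 (t0 + T), ∀ j : Fin N, S.h e j t ≤ M := by
  have main : ∀ ε > (0:ℝ), ∀ t ∈ Icc t0 (t0 + T), ∀ j : Fin N,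
      S.h e j t ≤ M + ε * Real.exp (t - t0) := by
    intro ε hε
    by_contra hcon
    push_neg at hcon
    obtain ⟨tb, htb, jb, hjb⟩ := hcon
    set B : ℝ → ℝ := fun t => M + ε * Real.exp (t - t0) with hBdef
    have hBcont : Continuous B := by fun_prop
    have hBmono : ∀ ⦃s t : ℝ⦄, s ≤ t → B s ≤ B t := by
      intro s t hst
      have := Real.exp_le_exp.2 (by linarith : s - t0 ≤ t - t0)
      simp only [hBdef]
      nlinarith
    have hMB : ∀ t : ℝ, M < B t := by
      intro t
      have := Real.exp_pos (t - t0)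
      simp only [hBdef]
      nlinarith
    set bad : Set ℝ := {t | t ∈ Icc t0 (t0 + T) ∧ ∃ j : Fin N, B t < S.h e j t} with hbaddef
    have hbad_ne : bad.Nonempty := ⟨tb, htb, jb, hjb⟩
    have hbad_bdd : BddBelow bad := ⟨t0, fun t ht => ht.1.1⟩
    set c : ℝ := sInf bad with hcdef
    have hc_le : ∀ t ∈ bad, c ≤ t := fun t ht => csInf_le hbad_bdd ht
    have hc_mem : c ∈ Icc t0 (t0 + T) := by
      obtain ⟨t, ht⟩ := id hbad_ne
      exact ⟨le_csInf hbad_ne fun s hs => hs.1.1, (hc_le t ht).trans ht.1.2⟩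
    have hc_not : c ∉ bad := by
      intro hc
      obtain ⟨hcIcc, j, hj⟩ := hc
      have ht0c : t0 < c := by
        rcases lt_or_eq_of_le hcIcc.1 with h | h
        · exact h
        · exfalso
          have h1 : S.h e j t0 ≤ M := hM j t0 ⟨by linarith [S.τbar_nonneg], le_refl t0⟩
          rw [← h] at hj
          exact absurd hj (by linarith [hMB t0])
      set g : ℝ → ℝ := fun t => S.h e j t - B t with hgdef
      have hgc : 0 < g c := by simp only [hgdef]; linarith
      have hgcont : Continuous g := (S.h_cont e j).sub hBcont
      have hev : ∀ᶠ t in 𝓝 c, 0 < g t := (hgcont.tendsto c).eventually_const_lt hgc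
      rw [Metric.eventually_nhds_iff_ball] at hev
      obtain ⟨δ, hδ, hball⟩ := hev
      set t' : ℝ := max t0 (c - δ/2) with ht'def
      have ht'c : t' < c := by
        apply max_lt ht0c; linarith
      have ht'mem : t' ∈ Metric.ball c δ := by
        rw [Metric.mem_ball, Real.dist_eq, abs_lt]
        constructor
        · have : c - δ/2 ≤ t' := le_max_right _ _
          linarith
        · linarith
      have ht'bad : t' ∈ bad := by
        refine ⟨⟨le_max_left _ _, by linarith [hc_mem.2]⟩, j, ?_⟩
        have := hball t' ht'mem
        simp only [hgdef] at this
        linarith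
      exact absurd (hc_le t' ht'bad) (not_le.2 ht'c)
    -- the sequence approaching c from the right
    have hseq : ∀ k : ℕ, ∃ t ∈ bad, t < c + 1/(k+1) := by
      intro k
      refine (csInf_lt_iff hbad_bdd hbad_ne).1 ?_
      have : (0:ℝ) < 1/(k+1) := by positivity
      linarith
    choose u hu1 hu2 using hseq
    have hcu : ∀ k, c < u k := by
      intro k
      rcases lt_or_eq_of_le (hc_le (u k) (hu1 k)) with h | h
      · exact h
      · exact absurd (h ▸ hu1 k) hc_not
    have hu_tendsto : Tendsto u atTop (𝓝 c) := by
      have hup : Tendsto (fun k : ℕ => c + 1/(k+1)) atTop (𝓝 (c + 0)) :=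
        tendsto_const_nhds.add tendsto_one_div_add_atTop_nhds_zero_nat
      rw [add_zero] at hup
      exact tendsto_of_tendsto_of_tendsto_of_le_of_le tendsto_const_nhds hup
        (fun k => (hcu k).le) (fun k => (hu2 k).le)
    -- pigeonhole: one index is bad frequently
    have hφ : ∀ k, ∃ j : Fin N, B (u k) < S.h e j (u k) := fun k => (hu1 k).2
    choose φ hφ2 using hφ
    obtain ⟨i, hi⟩ := Finite.exists_infinite_fiber φ
    rw [Set.infinite_coe_iff] at hi
    have hfreq : ∃ᶠ k in atTop, φ k = i :=
      Nat.frequently_atTop_iff_infinite.2 (by simpa [Set.preimage] using hi)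
    have hfreq2 : ∃ᶠ k in atTop, B (u k) < S.h e i (u k) :=
      hfreq.mono fun k hk => hk ▸ hφ2 k
    -- h i c = B c
    have hic_ge : B c ≤ S.h e i c := by
      have htend : Tendsto (fun k => S.h e i (u k) - B (u k)) atTop (𝓝 (S.h e i c - B c)) :=
        (((S.h_cont e i).sub hBcont).tendsto c).comp hu_tendsto
      have hfr : ∃ᶠ k in atTop, (fun k => S.h e i (u k) - B (u k)) k ∈ Ici (0:ℝ) :=
        hfreq2.mono fun k hk => by simp [mem_Ici]; linarith
      have := mem_closure_of_frequently_of_tendsto hfr htend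
      rw [closure_Ici, mem_Ici] at this
      linarith
    have hle_upto : ∀ s ∈ Icc t0 c, ∀ j : Fin N, S.h e j s ≤ B s := by
      intro s hs j
      by_contra hlt
      push_neg at hlt
      have hsbad : s ∈ bad := ⟨⟨hs.1, hs.2.trans hc_mem.2⟩, j, hlt⟩
      have := hc_le s hsbad
      have hsc : s = c := le_antisymm hs.2 this
      exact hc_not (hsc ▸ hsbad)
    have hic_le : S.h e i c ≤ B c := hle_upto c ⟨hc_mem.1, le_refl c⟩ i
    have hic : S.h e i c = B c := le_antisymm hic_le hic_ge
    have ht0c : t0 < c := by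
      rcases lt_or_eq_of_le hc_mem.1 with h | h
      · exact h
      · exfalso
        have h1 : S.h e i t0 ≤ M := hM i t0 ⟨by linarith [S.τbar_nonneg], le_refl t0⟩
        rw [← h] at hic
        have := hMB t0
        linarith
    have hc_pos : 0 < c := lt_of_le_of_lt ht0 ht0c
    -- derivative considerations at c
    have hd := S.hasDerivAt_h e i hc_pos
    set D : ℝ := ∑ j ∈ Finset.univ.erase i, S.coef i j c * (S.h e j (c - S.τ c) - S.h e i c)
      with hDdef
    have hB' : HasDerivAt B (ε * Real.exp (c - t0)) c := by
      have h1 : HasDerivAt (fun t : ℝ => t - t0) 1 c := (hasDerivAt_id c).sub_const t0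
      have h3 := h1.exp.const_mul ε
      simp only [mul_one] at h3
      exact h3.const_add M
    have hF : HasDerivAt (fun t => S.h e i t - B t) (D - ε * Real.exp (c - t0)) c := hd.sub hB'
    have hslope := (hasDerivAt_iff_tendsto_slope.1 hF)
    have hu_tendsto' : Tendsto u atTop (𝓝[≠] c) :=
      tendsto_nhdsWithin_iff.2 ⟨hu_tendsto, Eventually.of_forall fun k => (hcu k).ne'⟩
    have hslope2 : Tendsto (fun k => slope (fun t => S.h e i t - B t) c (u k)) atTop
        (𝓝 (D - ε * Real.exp (c - t0))) := hslope.comp hu_tendsto'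
    have hfr : ∃ᶠ k in atTop,
        (fun k => slope (fun t => S.h e i t - B t) c (u k)) k ∈ Ici (0:ℝ) := by
      refine hfreq2.mono fun k hk => ?_
      have hnum : 0 < (S.h e i (u k) - B (u k)) - (S.h e i c - B c) := by
        rw [hic]; linarith
      have hden : 0 < u k - c := by linarith [hcu k]
      simp only [slope_def_field, mem_Ici]
      rw [div_eq_inv_mul]
      positivity
    have hDge : 0 ≤ D - ε * Real.exp (c - t0) := by
      have := mem_closure_of_frequently_of_tendsto hfr hslope2
      rwa [closure_Ici, mem_Ici] at this
    -- but D ≤ 0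
    have hDle : D ≤ 0 := by
      rw [hDdef]
      apply Finset.sum_nonpos
      intro j _
      apply mul_nonpos_of_nonneg_of_nonpos (S.coef_nonneg hN i j hc_pos.le)
      have hτ := S.τ_mem c hc_pos.le
      set s' : ℝ := c - S.τ c with hs'def
      have hs'le : s' ≤ c := by simp only [hs'def]; linarith [hτ.1]
      have hjs' : S.h e j s' ≤ B c := by
        rcases le_or_gt s' t0 with h | h
        · have h1 : S.h e j s' ≤ M := hM j s' ⟨by simp only [hs'def]; linarith [hτ.2], h⟩
          linarith [hMB c]
        · have := hle_upto s' ⟨h.le, hs'le⟩ j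
          linarith [hBmono hs'le]
      rw [hic]
      linarith
    have := Real.exp_pos (c - t0)
    nlinarith
  -- take ε → 0
  intro t ht j
  refine le_of_forall_pos_le_add fun ε' hε' => ?_
  have hexp := Real.exp_pos (t - t0)
  have h1 := main (ε' / Real.exp (t - t0)) (by positivity) t ht j
  calc S.h e j t ≤ M + ε' / Real.exp (t - t0) * Real.exp (t - t0) := h1
    _ = M + ε' := by field_simp

/-- key decay estimate along a direction -/
lemma CS.key (S : CS d N) (hN : 2 ≤ N) (e : EuclideanSpace ℝ (Fin d))
    {t0 T M : ℝ} (hT : 0 < T) (ht0 : 0 ≤ t0)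
    (hM : ∀ j : Fin N, ∀ s ∈ Icc (t0 - S.τbar) t0, S.h e j s ≤ M) :
    ∀ i : Fin N, ∀ t ∈ Icc t0 (t0 + T),
      S.h e i t ≤ Real.exp (-S.K * T) * S.h e i t0 + (1 - Real.exp (-S.K * T)) * M := by
  have hInv := S.invariance hN e hT ht0 hM
  intro i t ht
  have hK := S.K_pos
  set a : ℝ := S.h e i t0 with hadef
  have haM : a ≤ M := hM i t0 ⟨by linarith [S.τbar_nonneg], le_refl t0⟩
  -- Gronwall via the auxiliary function G
  set G : ℝ → ℝ := fun s => (S.h e i s - M) * Real.exp (S.K * (s - t0)) with hGdef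
  have hGcont : Continuous G := by
    apply Continuous.mul ((S.h_cont e i).sub continuous_const)
    fun_prop
  have hG' : ∀ s ∈ Ioo t0 (t0 + T),
      HasDerivAt G (((∑ j ∈ Finset.univ.erase i,
          S.coef i j s * (S.h e j (s - S.τ s) - S.h e i s)) + S.K * (S.h e i s - M)) *
        Real.exp (S.K * (s - t0))) s := by
    intro s hs
    have hs_pos : 0 < s := lt_of_le_of_lt ht0 hs.1
    have hd := S.hasDerivAt_h e i hs_pos
    have hexp : HasDerivAt (fun r : ℝ => Real.exp (S.K * (r - t0)))
        (Real.exp (S.K * (s - t0)) * S.K) s := by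
      have h1 : HasDerivAt (fun r : ℝ => S.K * (r - t0)) S.K s := by
        simpa using ((hasDerivAt_id s).sub_const t0).const_mul S.K
      exact h1.exp
    have := (hd.sub_const M).mul hexp
    refine this.congr_deriv ?_
    ring
  have hGanti : AntitoneOn G (Icc t0 (t0 + T)) := by
    apply antitoneOn_of_deriv_nonpos (convex_Icc t0 (t0 + T)) hGcont.continuousOn
    · intro s hs
      rw [interior_Icc] at hs
      exact (hG' s hs).differentiableAt.differentiableWithinAt
    · intro s hs
      rw [interior_Icc] at hs
      rw [(hG' s hs).deriv]
      have hs_pos : 0 < s := lt_of_le_of_lt ht0 hs.1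
      have hexp_pos := Real.exp_pos (S.K * (s - t0))
      have hsum : (∑ j ∈ Finset.univ.erase i,
          S.coef i j s * (S.h e j (s - S.τ s) - S.h e i s)) + S.K * (S.h e i s - M) ≤ 0 := by
        have hhs : S.h e i s ≤ M := hInv s ⟨hs.1.le, hs.2.le⟩ i
        have hτ := S.τ_mem s hs_pos.le
        have hdelay : ∀ j : Fin N, S.h e j (s - S.τ s) ≤ M := by
          intro j
          rcases le_or_gt (s - S.τ s) t0 with h | h
          · exact hM j _ ⟨by linarith [hτ.2, hs.1], h⟩
          · exact hInv _ ⟨h.le, by linarith [hτ.1, hs.2]⟩ j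
        have h1 : (∑ j ∈ Finset.univ.erase i,
            S.coef i j s * (S.h e j (s - S.τ s) - S.h e i s))
            ≤ ∑ j ∈ Finset.univ.erase i, S.coef i j s * (M - S.h e i s) := by
          apply Finset.sum_le_sum
          intro j _
          apply mul_le_mul_of_nonneg_left _ (S.coef_nonneg hN i j hs_pos.le)
          linarith [hdelay j]
        have h2 : ∑ j ∈ Finset.univ.erase i, S.coef i j s * (M - S.h e i s)
            = (∑ j ∈ Finset.univ.erase i, S.coef i j s) * (M - S.h e i s) := by
          rw [Finset.sum_mul]
        have h3 : (∑ j ∈ Finset.univ.erase i, S.coef i j s) * (M - S.h e i s)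
            ≤ S.K * (M - S.h e i s) :=
          mul_le_mul_of_nonneg_right (S.sum_coef_le hN i hs_pos.le) (by linarith)
        have := h1.trans (h2 ▸ h3)
        linarith
      exact mul_nonpos_of_nonpos_of_nonneg hsum hexp_pos.le
  have hGt : G t ≤ G t0 := by
    apply hGanti (left_mem_Icc.2 (by linarith)) ht ht.1
  have hGt0 : G t0 = a - M := by simp [hGdef, hadef]
  rw [hGt0] at hGt
  -- unwind
  have hexp_pos := Real.exp_pos (S.K * (t - t0))
  have h4 : S.h e i t - M ≤ (a - M) * Real.exp (-(S.K * (t - t0))) := by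
    rw [Real.exp_neg, ← div_eq_mul_inv, le_div_iff₀ hexp_pos]
    simpa [hGdef] using hGt
  have h5 : (a - M) * Real.exp (-(S.K * (t - t0))) ≤ (a - M) * Real.exp (-S.K * T) := by
    apply mul_le_mul_of_nonpos_left _ (by linarith : a - M ≤ 0)
    apply Real.exp_le_exp.2
    have h6 : t - t0 ≤ T := by linarith [ht.2]
    nlinarith [hK.le]
  nlinarith [h4, h5]

lemma CS.vbound (S : CS d N) (a b : ℝ) :
    ∃ C : ℝ, ∀ i : Fin N, ∀ s ∈ Icc a b, ‖S.v i s‖ ≤ C := by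
  have : ∀ i : Fin N, ∃ C, ∀ s ∈ Icc a b, ‖S.v i s‖ ≤ C := by
    intro i
    obtain ⟨C, hC⟩ := (isCompact_Icc (a := a) (b := b)).exists_bound_of_continuousOn
      (S.v_cont i).continuousOn
    exact ⟨C, hC⟩
  choose C hC using this
  refine ⟨∑ j : Fin N, |C j|, fun i s hs => (hC i s hs).trans ?_⟩
  calc C i ≤ |C i| := le_abs_self _
    _ ≤ ∑ j : Fin N, |C j| := Finset.single_le_sum (fun j _ => abs_nonneg (C j)) (Finset.mem_univ i)

lemma CS.Dn_set_bddAbove (S : CS d N) (a b : ℝ) :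
    BddAbove {r | ∃ i j : Fin N, ∃ s ∈ Icc a b, ∃ u ∈ Icc a b, r = ‖S.v i s - S.v j u‖} := by
  obtain ⟨C, hC⟩ := S.vbound a b
  refine ⟨2 * C, ?_⟩
  rintro r ⟨i, j, s, hs, u, hu, rfl⟩
  calc ‖S.v i s - S.v j u‖ ≤ ‖S.v i s‖ + ‖S.v j u‖ := norm_sub_le _ _
    _ ≤ C + C := add_le_add (hC i s hs) (hC j u hu)
    _ = 2 * C := by ring

lemma CS.dV_set_bddAbove (S : CS d N) (t : ℝ) :
    BddAbove {r | ∃ i j : Fin N, r = ‖S.v i t - S.v j t‖} := by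
  apply Set.Finite.bddAbove
  apply Set.Finite.subset (Set.finite_range fun p : Fin N × Fin N => ‖S.v p.1 t - S.v p.2 t‖)
  rintro r ⟨i, j, rfl⟩
  exact ⟨(i, j), rfl⟩

lemma CS.dV_nonneg (S : CS d N) (hN : 2 ≤ N) (t : ℝ) : 0 ≤ S.dV t := by
  have h0 : (0:ℝ) ∈ {r | ∃ i j : Fin N, r = ‖S.v i t - S.v j t‖} :=
    ⟨⟨0, by omega⟩, ⟨0, by omega⟩, by simp⟩
  exact le_csSup (S.dV_set_bddAbove t) h0

lemma CS.inner_le_dV (S : CS d N) (t : ℝ) (i j : Fin N) (e : EuclideanSpace ℝ (Fin d))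
    (he : ‖e‖ = 1) : ⟪S.v i t - S.v j t, e⟫ ≤ S.dV t := by
  have h1 : (⟪S.v i t - S.v j t, e⟫ : ℝ) ≤ ‖S.v i t - S.v j t‖ := by
    calc (⟪S.v i t - S.v j t, e⟫ : ℝ) ≤ ‖S.v i t - S.v j t‖ * ‖e‖ := real_inner_le_norm _ _
      _ = ‖S.v i t - S.v j t‖ := by rw [he, mul_one]
  exact h1.trans (le_csSup (S.dV_set_bddAbove t) ⟨i, j, rfl⟩)

end Aux

/-- recursive estimate `D_{n+1} ≤ e^{-KT} d_V(nT) + (1 - e^{-KT}) D_n`. -/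
theorem cs_Dn_recursive {d N : ℕ} (S : CS d N) (hN : 2 ≤ N)
    (T : ℝ) (hT : 0 < T) (hTτ : S.τbar ≤ T) :
    ∀ n : ℕ, S.Dn T (n + 1) ≤
      Real.exp (-S.K * T) * S.dV ((n : ℝ) * T) +
        (1 - Real.exp (-S.K * T)) * S.Dn T n := by
  intro n
  classical
  haveI : NeZero N := ⟨by omega⟩
  open Set Filter in
  set t0 : ℝ := (n : ℝ) * T with ht0def
  have ht0 : 0 ≤ t0 := mul_nonneg (Nat.cast_nonneg n) hT.le
  set E : ℝ := Real.exp (-S.K * T) with hEdef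
  have hE0 : 0 < E := Real.exp_pos _
  have hK := S.K_pos
  have hE1 : E ≤ 1 := by
    rw [hEdef]
    apply Real.exp_le_one_iff.2
    nlinarith
  have hτ0 := S.τbar_nonneg
  have hDn_nonneg : 0 ≤ S.Dn T n := by
    refine le_csSup (S.Dn_set_bddAbove _ _) ?_
    exact ⟨⟨0, by omega⟩, ⟨0, by omega⟩, t0, ⟨by linarith, le_refl t0⟩, t0,
      ⟨by linarith, le_refl t0⟩, by simp⟩
  have hRHS : 0 ≤ E * S.dV t0 + (1 - E) * S.Dn T n :=
    add_nonneg (mul_nonneg hE0.le (S.dV_nonneg hN t0)) (mul_nonneg (by linarith) hDn_nonneg)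
  refine Real.sSup_le ?_ hRHS
  rintro r ⟨i, j, s, hs, u, hu, rfl⟩
  push_cast at hs hu
  have hsub : Icc (((n:ℝ)+1) * T - S.τbar) (((n:ℝ)+1) * T) ⊆ Icc t0 (t0 + T) := by
    apply Icc_subset_Icc
    · rw [ht0def]; nlinarith
    · rw [ht0def]; nlinarith
  have hs' : s ∈ Icc t0 (t0 + T) := hsub hs
  have hu' : u ∈ Icc t0 (t0 + T) := hsub hu
  rcases eq_or_ne (S.v i s) (S.v j u) with heq | hne
  · rw [heq]; simpa using hRHS
  · set w : EuclideanSpace ℝ (Fin d) := S.v i s - S.v j u with hwdef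
    have hw : w ≠ 0 := sub_ne_zero.2 hne
    set e : EuclideanSpace ℝ (Fin d) := ‖w‖⁻¹ • w with hedef
    have he : ‖e‖ = 1 := norm_smul_inv_norm hw
    have hwnorm : ‖w‖ ≠ 0 := norm_ne_zero_iff.2 hw
    have hinner : (⟪w, e⟫ : ℝ) = ‖w‖ := by
      rw [hedef, real_inner_smul_right, real_inner_self_eq_norm_sq]
      field_simp
    -- existence of attained maxima in the past window
    have hMex : ∀ f : EuclideanSpace ℝ (Fin d), ∃ (i0 : Fin N) (s0 : ℝ),
        s0 ∈ Icc (t0 - S.τbar) t0 ∧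
        ∀ j' : Fin N, ∀ s' ∈ Icc (t0 - S.τbar) t0, S.h f j' s' ≤ S.h f i0 s0 := by
      intro f
      have hIcc_ne : (Icc (t0 - S.τbar) t0).Nonempty := nonempty_Icc.2 (by linarith)
      have hper : ∀ i' : Fin N, ∃ s0 ∈ Icc (t0 - S.τbar) t0,
          ∀ s' ∈ Icc (t0 - S.τbar) t0, S.h f i' s' ≤ S.h f i' s0 := by
        intro i'
        obtain ⟨s0, hs0, hmax⟩ :=
          isCompact_Icc.exists_isMaxOn hIcc_ne (S.h_cont f i').continuousOn
        exact ⟨s0, hs0, fun s' hs' => hmax hs'⟩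
      choose s0 hs0mem hs0max using hper
      obtain ⟨i0, _, hi0⟩ := Finset.exists_max_image Finset.univ
        (fun i' => S.h f i' (s0 i')) Finset.univ_nonempty
      exact ⟨i0, s0 i0, hs0mem i0,
        fun j' s' hs' => (hs0max j' s' hs').trans (hi0 j' (Finset.mem_univ j'))⟩
    obtain ⟨i0, s0, hs0mem, hi0⟩ := hMex e
    obtain ⟨j0, u0, hu0mem, hj0⟩ := hMex (-e)
    set M : ℝ := S.h e i0 s0 with hMdef
    set M' : ℝ := S.h (-e) j0 u0 with hM'def
    have key1 := S.key hN e hT ht0 hi0 i s hs'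
    have key2 := S.key hN (-e) hT ht0 hj0 j u hu'
    have hneg : ∀ (i' : Fin N) (t : ℝ), S.h (-e) i' t = - S.h e i' t := by
      intro i' t
      simp [CS.h, inner_neg_right]
    have hMM' : M + M' ≤ S.Dn T n := by
      have h1 : M + M' = ⟪S.v i0 s0 - S.v j0 u0, e⟫ := by
        rw [hMdef, hM'def, hneg j0 u0]
        simp only [CS.h, inner_sub_left]
        ring
      rw [h1]
      have h2 : (⟪S.v i0 s0 - S.v j0 u0, e⟫ : ℝ) ≤ ‖S.v i0 s0 - S.v j0 u0‖ := by
        calc (⟪S.v i0 s0 - S.v j0 u0, e⟫ : ℝ) ≤ ‖S.v i0 s0 - S.v j0 u0‖ * ‖e‖ :=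
              real_inner_le_norm _ _
          _ = ‖S.v i0 s0 - S.v j0 u0‖ := by rw [he, mul_one]
      refine h2.trans (le_csSup (S.Dn_set_bddAbove _ _) ?_)
      exact ⟨i0, j0, s0, hs0mem, u0, hu0mem, rfl⟩
    have hdV : (⟪S.v i t0 - S.v j t0, e⟫ : ℝ) ≤ S.dV t0 := S.inner_le_dV t0 i j e he
    rw [hneg j u, hneg j t0] at key2
    have hwe : (⟪w, e⟫ : ℝ) = S.h e i s - S.h e j u := by
      rw [hwdef]; simp only [CS.h, inner_sub_left]
    have hde : (⟪S.v i t0 - S.v j t0, e⟫ : ℝ) = S.h e i t0 - S.h e j t0 := by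
      simp only [CS.h, inner_sub_left]
    calc ‖w‖ = ⟪w, e⟫ := hinner.symm
      _ = S.h e i s - S.h e j u := hwe
      _ ≤ E * (S.h e i t0 - S.h e j t0) + (1 - E) * (M + M') := by linarith
      _ = E * ⟪S.v i t0 - S.v j t0, e⟫ + (1 - E) * (M + M') := by rw [hde]
      _ ≤ E * S.dV t0 + (1 - E) * S.Dn T n :=
          add_le_add (mul_le_mul_of_nonneg_left hdV hE0.le)
            (mul_le_mul_of_nonneg_left hMM' (by linarith))
end

section
/- Defining φ(t) := min{ψ(r) : r ∈ [0, τ̄ C_0^V + M_0^X + max_{s∈[-τ̄,t]} d_X(s)]}, one has the lower bound b_{ij}(t) ≥ φ(t)/(N-1) on the communication rates for all t ≥ 0 and all i, j = 1,...,N. -/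
open scoped BigOperators RealInnerProductSpace

namespace CSaux

open Set

variable {d N : ℕ}

lemma psi_le_K (S : CS d N) (r : ℝ) : S.ψ r ≤ S.K :=
  le_csSup S.ψ_bdd ⟨r, rfl⟩

lemma K_pos (S : CS d N) : 0 < S.K :=
  lt_of_lt_of_le (S.ψ_pos 0) (psi_le_K S 0)

lemma exists_bound (f : Fin N → ℝ → EuclideanSpace ℝ (Fin d))
    (hf : ∀ i, Continuous (f i)) (a b : ℝ) :
    ∃ C : ℝ, 0 ≤ C ∧ ∀ i, ∀ s ∈ Icc a b, ‖f i s‖ ≤ C := by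
  have hG : Continuous (fun s => (fun i => f i s : Fin N → EuclideanSpace ℝ (Fin d))) :=
    continuous_pi fun i => hf i
  obtain ⟨C, hC⟩ := (isCompact_Icc (a := a) (b := b)).exists_bound_of_continuousOn
    hG.continuousOn
  exact ⟨max C 0, le_max_right _ _, fun i s hs =>
    ((norm_le_pi_norm _ i).trans (hC s hs)).trans (le_max_left _ _)⟩

lemma inner_D_le (S : CS d N) (hN : 2 ≤ N) (i : Fin N) (t M : ℝ) (ht : 0 < t)
    (hvM : ‖S.v i t‖ ≤ M)
    (hwM : ∀ j : Fin N, ‖S.v j (t - S.τ t)‖ ≤ M) :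
    ⟪S.v i t, ∑ j ∈ Finset.univ.erase i,
      (S.α t * (S.ψ ‖S.x i t - S.x j (t - S.τ t)‖ / ((N : ℝ) - 1))) •
        (S.v j (t - S.τ t) - S.v i t)⟫ ≤ S.K * (M ^ 2 - ‖S.v i t‖ ^ 2) := by
  have hN2 : (2:ℝ) ≤ (N:ℝ) := by exact_mod_cast hN
  have hNpos : (0:ℝ) < (N:ℝ) - 1 := by linarith
  have hK := K_pos S
  have hα := S.α_mem t ht.le
  have hP : 0 ≤ ‖S.v i t‖ * (M - ‖S.v i t‖) :=
    mul_nonneg (norm_nonneg _) (by linarith)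
  have hterm : ∀ j ∈ Finset.univ.erase i,
      ⟪S.v i t, (S.α t * (S.ψ ‖S.x i t - S.x j (t - S.τ t)‖ / ((N : ℝ) - 1))) •
        (S.v j (t - S.τ t) - S.v i t)⟫
      ≤ (S.K / ((N:ℝ)-1)) * (‖S.v i t‖ * (M - ‖S.v i t‖)) := by
    intro j _
    rw [real_inner_smul_right]
    have h1 : ⟪S.v i t, S.v j (t - S.τ t) - S.v i t⟫
        ≤ ‖S.v i t‖ * (M - ‖S.v i t‖) := by
      rw [inner_sub_right, real_inner_self_eq_norm_sq]
      have hcs := real_inner_le_norm (S.v i t) (S.v j (t - S.τ t))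
      have hw := hwM j
      nlinarith [norm_nonneg (S.v i t), norm_nonneg (S.v j (t - S.τ t))]
    have ha0 : 0 ≤ S.α t * (S.ψ ‖S.x i t - S.x j (t - S.τ t)‖ / ((N : ℝ) - 1)) :=
      mul_nonneg hα.1 (div_nonneg (S.ψ_pos _).le hNpos.le)
    have ha1 : S.α t * (S.ψ ‖S.x i t - S.x j (t - S.τ t)‖ / ((N : ℝ) - 1))
        ≤ S.K / ((N:ℝ)-1) := by
      have h2 : S.ψ ‖S.x i t - S.x j (t - S.τ t)‖ / ((N : ℝ) - 1)
          ≤ S.K / ((N:ℝ)-1) := by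
        apply div_le_div_of_nonneg_right (psi_le_K S _) hNpos.le
      calc S.α t * (S.ψ ‖S.x i t - S.x j (t - S.τ t)‖ / ((N : ℝ) - 1))
          ≤ 1 * (S.ψ ‖S.x i t - S.x j (t - S.τ t)‖ / ((N : ℝ) - 1)) := by
            apply mul_le_mul_of_nonneg_right hα.2
            exact div_nonneg (S.ψ_pos _).le hNpos.le
        _ = S.ψ ‖S.x i t - S.x j (t - S.τ t)‖ / ((N : ℝ) - 1) := one_mul _
        _ ≤ S.K / ((N:ℝ)-1) := h2
    calc S.α t * (S.ψ ‖S.x i t - S.x j (t - S.τ t)‖ / ((N : ℝ) - 1)) *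
          ⟪S.v i t, S.v j (t - S.τ t) - S.v i t⟫
        ≤ S.α t * (S.ψ ‖S.x i t - S.x j (t - S.τ t)‖ / ((N : ℝ) - 1)) *
          (‖S.v i t‖ * (M - ‖S.v i t‖)) := mul_le_mul_of_nonneg_left h1 ha0
      _ ≤ (S.K / ((N:ℝ)-1)) * (‖S.v i t‖ * (M - ‖S.v i t‖)) :=
          mul_le_mul_of_nonneg_right ha1 hP
  have hcard : (Finset.univ.erase i).card = N - 1 := by
    rw [Finset.card_erase_of_mem (Finset.mem_univ i), Finset.card_univ, Fintype.card_fin]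
  have hcast : ((N - 1 : ℕ) : ℝ) = (N:ℝ) - 1 := by
    have : 1 ≤ N := by omega
    push_cast [Nat.cast_sub this]
    ring
  calc ⟪S.v i t, ∑ j ∈ Finset.univ.erase i,
        (S.α t * (S.ψ ‖S.x i t - S.x j (t - S.τ t)‖ / ((N : ℝ) - 1))) •
          (S.v j (t - S.τ t) - S.v i t)⟫
      = ∑ j ∈ Finset.univ.erase i,
        ⟪S.v i t, (S.α t * (S.ψ ‖S.x i t - S.x j (t - S.τ t)‖ / ((N : ℝ) - 1))) •
          (S.v j (t - S.τ t) - S.v i t)⟫ := inner_sum _ _ _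
    _ ≤ ∑ _j ∈ Finset.univ.erase i,
          (S.K / ((N:ℝ)-1)) * (‖S.v i t‖ * (M - ‖S.v i t‖)) := Finset.sum_le_sum hterm
    _ = ((N:ℝ) - 1) * ((S.K / ((N:ℝ)-1)) * (‖S.v i t‖ * (M - ‖S.v i t‖))) := by
        rw [Finset.sum_const, hcard, nsmul_eq_mul, hcast]
    _ = S.K * (‖S.v i t‖ * (M - ‖S.v i t‖)) := by
        field_simp
    _ ≤ S.K * (M ^ 2 - ‖S.v i t‖ ^ 2) := by
        have hM0 : 0 ≤ M := (norm_nonneg _).trans hvM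
        have hkey : 0 ≤ (M - ‖S.v i t‖) * M :=
          mul_nonneg (sub_nonneg.mpr hvM) hM0
        nlinarith [hK, norm_nonneg (S.v i t)]

lemma gronwall (S : CS d N) (hN : 2 ≤ N) (i : Fin N) (tstar M : ℝ)
    (ht : 0 < tstar)
    (hM : ∀ j : Fin N, ∀ s ∈ Icc (-S.τbar) tstar, ‖S.v j s‖ ≤ M)
    (hMt : ‖S.v i tstar‖ = M) : ‖S.v i 0‖ = M := by
  have hτb := S.τbar_nonneg
  set g : ℝ → ℝ := fun t => (M ^ 2 - ⟪S.v i t, S.v i t⟫) * Real.exp (2 * S.K * t) with hgdef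
  have hgc : Continuous g := by
    apply Continuous.mul
    · exact continuous_const.sub ((S.v_cont i).inner (S.v_cont i))
    · exact Real.continuous_exp.comp (continuous_const.mul continuous_id)
  have key : ∀ t ∈ Ioo (0:ℝ) tstar, ∃ c, HasDerivAt g c t ∧ 0 ≤ c := by
    intro t htm
    have hτ := S.τ_mem t htm.1.le
    obtain ⟨D, hvd, hDle⟩ : ∃ D, HasDerivAt (S.v i) D t ∧
        ⟪S.v i t, D⟫ ≤ S.K * (M ^ 2 - ‖S.v i t‖ ^ 2) := by
      refine ⟨_, S.v_deriv i t htm.1, ?_⟩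
      apply inner_D_le S hN i t M htm.1
      · exact hM i t ⟨by linarith [htm.1], htm.2.le⟩
      · intro j
        exact hM j _ ⟨by linarith [hτ.2, htm.1], by linarith [hτ.1, htm.2.le]⟩
    have hinner : HasDerivAt (fun s => ⟪S.v i s, S.v i s⟫)
        (⟪S.v i t, D⟫ + ⟪D, S.v i t⟫) t := HasDerivAt.inner ℝ hvd hvd
    have hf : HasDerivAt (fun s => M ^ 2 - ⟪S.v i s, S.v i s⟫)
        (-(⟪S.v i t, D⟫ + ⟪D, S.v i t⟫)) t := hinner.const_sub (M ^ 2)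
    have hlin : HasDerivAt (fun s : ℝ => 2 * S.K * s) (2 * S.K) t := by
      simpa using (hasDerivAt_id t).const_mul (2 * S.K)
    have hexp : HasDerivAt (fun s : ℝ => Real.exp (2 * S.K * s))
        (Real.exp (2 * S.K * t) * (2 * S.K)) t := hlin.exp
    have hg : HasDerivAt g
        ((-(⟪S.v i t, D⟫ + ⟪D, S.v i t⟫)) * Real.exp (2 * S.K * t)
          + (M ^ 2 - ⟪S.v i t, S.v i t⟫) * (Real.exp (2 * S.K * t) * (2 * S.K))) t :=
      hf.mul hexp
    refine ⟨_, hg, ?_⟩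
    have hcomm : ⟪D, S.v i t⟫ = ⟪S.v i t, D⟫ := real_inner_comm _ _
    have hself : ⟪S.v i t, S.v i t⟫ = ‖S.v i t‖ ^ 2 := real_inner_self_eq_norm_sq _
    rw [hcomm, hself]
    have hE := Real.exp_pos (2 * S.K * t)
    nlinarith [hE]
  have hmono : MonotoneOn g (Icc 0 tstar) := by
    apply monotoneOn_of_deriv_nonneg (convex_Icc 0 tstar) hgc.continuousOn
    · intro t htm
      rw [interior_Icc] at htm
      obtain ⟨c, hd, _⟩ := key t htm
      exact hd.differentiableAt.differentiableWithinAt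
    · intro t htm
      rw [interior_Icc] at htm
      obtain ⟨c, hd, hc⟩ := key t htm
      rw [hd.deriv]; exact hc
  have h0 : g 0 ≤ g tstar := hmono ⟨le_refl 0, ht.le⟩ ⟨ht.le, le_refl _⟩ ht.le
  have hgt : g tstar = 0 := by
    simp only [hgdef]
    rw [real_inner_self_eq_norm_sq, hMt]
    ring
  have hv0 : ‖S.v i 0‖ ≤ M := hM i 0 ⟨by linarith, ht.le⟩
  have hM0 : 0 ≤ M := (norm_nonneg _).trans hv0
  have hg0 : g 0 = M ^ 2 - ‖S.v i 0‖ ^ 2 := by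
    simp only [hgdef]
    rw [real_inner_self_eq_norm_sq]
    norm_num
  rw [hgt, hg0] at h0
  have hle : M ≤ ‖S.v i 0‖ := by
    nlinarith [norm_nonneg (S.v i 0), sq_nonneg (M - ‖S.v i 0‖), sq_nonneg (M + ‖S.v i 0‖)]
  linarith

lemma vel_bound (S : CS d N) (hN : 2 ≤ N) (t : ℝ) (ht : 0 ≤ t) (i : Fin N) :
    ‖S.v i t‖ ≤ S.C0V := by
  haveI : Nonempty (Fin N) := ⟨⟨0, by omega⟩⟩
  have hτb := S.τbar_nonneg
  set G : ℝ → (Fin N → EuclideanSpace ℝ (Fin d)) := fun s => (fun j => S.v j s) with hG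
  have hGc : Continuous G := continuous_pi fun j => S.v_cont j
  have hne : (Icc (-S.τbar) t).Nonempty := ⟨t, by constructor <;> linarith⟩
  obtain ⟨ts, hts, htsmax⟩ := isCompact_Icc.exists_isMaxOn hne (hGc.norm.continuousOn)
  set M := ‖G ts‖ with hMdef
  have hMb : ∀ j : Fin N, ∀ s ∈ Icc (-S.τbar) t, ‖S.v j s‖ ≤ M := fun j s hs =>
    (norm_le_pi_norm (G s) j).trans (htsmax hs)
  obtain ⟨i₀, _, hi₀⟩ := Finset.exists_mem_eq_sup (Finset.univ : Finset (Fin N))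
    Finset.univ_nonempty (fun j => ‖G ts j‖₊)
  have hMi : M = ‖S.v i₀ ts‖ := by
    rw [hMdef, Pi.norm_def, hi₀]; rfl
  have hbdd : BddAbove {r | ∃ j : Fin N, ∃ s ∈ Icc (-S.τbar) 0, r = ‖S.v j s‖} := by
    refine ⟨M, ?_⟩
    rintro r ⟨j, s, hs, rfl⟩
    exact hMb j s ⟨hs.1, hs.2.trans ht⟩
  have hMC : M ≤ S.C0V := by
    rcases le_or_gt ts 0 with h | h
    · rw [hMi]
      exact le_csSup hbdd ⟨i₀, ts, ⟨hts.1, h⟩, rfl⟩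
    · have h0 : ‖S.v i₀ 0‖ = M :=
        gronwall S hN i₀ ts M h (fun j s hs => hMb j s ⟨hs.1, hs.2.trans hts.2⟩) hMi.symm
      rw [← h0]
      exact le_csSup hbdd ⟨i₀, 0, ⟨by linarith, le_refl 0⟩, rfl⟩
  exact (hMb i t ⟨by linarith, le_refl t⟩).trans hMC

lemma disp (S : CS d N) (hN : 2 ≤ N) (j : Fin N) (a b : ℝ) (ha : 0 ≤ a) (hab : a ≤ b) :
    ‖S.x j b - S.x j a‖ ≤ S.C0V * (b - a) := by
  set f : ℝ → EuclideanSpace ℝ (Fin d) := fun s => S.x j (a + b - s) with hf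
  have hfc : Continuous f := (S.x_cont j).comp (by continuity)
  have key := norm_image_sub_le_of_norm_deriv_right_le_segment
    (f := f) (f' := fun s => -S.v j (a + b - s)) (C := S.C0V) (a := a) (b := b)
    hfc.continuousOn ?_ ?_ b ⟨hab, le_refl b⟩
  · have h1 : f b = S.x j a := by simp [hf]
    have h2 : f a = S.x j b := by
      simp only [hf]; norm_num
    rw [h1, h2, norm_sub_rev] at key
    exact key
  · intro s hs
    have hpt : 0 < a + b - s := by
      rcases hs with ⟨h1, h2⟩; linarith
    have hinner : HasDerivAt (fun s : ℝ => a + b - s) (-1) s := by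
      exact (hasDerivAt_id' s).const_sub (a + b)
    have hcomp : HasDerivAt (S.x j ∘ fun s : ℝ => a + b - s)
        ((-1 : ℝ) • S.v j (a + b - s)) s :=
      (S.x_deriv j (a + b - s) hpt).scomp s hinner
    have : HasDerivAt f (-S.v j (a + b - s)) s := by
      simpa [hf, Function.comp_def, neg_one_smul] using hcomp
    exact this.hasDerivWithinAt
  · intro s hs
    have hpt : 0 ≤ a + b - s := by
      rcases hs with ⟨h1, h2⟩; linarith
    rw [norm_neg]
    exact vel_bound S hN _ hpt j

end CSaux

/-- lower bound on the communication rates. -/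
theorem cs_weight_lower_bound {d N : ℕ} (S : CS d N) (hN : 2 ≤ N) :
    ∀ t, 0 ≤ t → ∀ i j : Fin N, S.phi t / ((N : ℝ) - 1) ≤ S.b i j t := by
  intro t ht i j
  haveI : Nonempty (Fin N) := ⟨⟨0, by omega⟩⟩
  have hN2 : (2:ℝ) ≤ (N:ℝ) := by exact_mod_cast hN
  have hN1 : (0:ℝ) < (N:ℝ) - 1 := by linarith
  have hτ := S.τ_mem t ht
  have hτb := S.τbar_nonneg
  have hC0V : 0 ≤ S.C0V := (norm_nonneg (S.v i t)).trans (CSaux.vel_bound S hN t ht i)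
  obtain ⟨C, hC0, hC⟩ := CSaux.exists_bound S.x S.x_cont (-S.τbar) t
  have hM0Xbdd : BddAbove {r | ∃ l : Fin N, ∃ s ∈ Set.Icc (-S.τbar) 0,
      ∃ u ∈ Set.Icc (-S.τbar) 0, r = ‖S.x l s - S.x l u‖} := by
    refine ⟨2 * C, ?_⟩
    rintro r ⟨l, s, hs, u, hu, rfl⟩
    have h1 := hC l s ⟨hs.1, hs.2.trans ht⟩
    have h2 := hC l u ⟨hu.1, hu.2.trans ht⟩
    calc ‖S.x l s - S.x l u‖ ≤ ‖S.x l s‖ + ‖S.x l u‖ := norm_sub_le _ _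
      _ ≤ 2 * C := by linarith
  have hM0X0 : 0 ≤ S.M0X := by
    have hmem : (0:ℝ) ∈ {r | ∃ l : Fin N, ∃ s ∈ Set.Icc (-S.τbar) 0,
        ∃ u ∈ Set.Icc (-S.τbar) 0, r = ‖S.x l s - S.x l u‖} :=
      ⟨i, 0, ⟨by linarith, le_refl 0⟩, 0, ⟨by linarith, le_refl 0⟩, by simp⟩
    exact le_csSup hM0Xbdd hmem
  have hdX_le : ∀ s ∈ Set.Icc (-S.τbar) t, S.dX s ≤ 2 * C := by
    intro s hs
    apply Real.sSup_le
    · rintro r ⟨i', j', rfl⟩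
      have h1 := hC i' s hs
      have h2 := hC j' s hs
      calc ‖S.x i' s - S.x j' s‖ ≤ ‖S.x i' s‖ + ‖S.x j' s‖ := norm_sub_le _ _
        _ ≤ 2 * C := by linarith
    · linarith
  have hDbdd : BddAbove (S.dX '' Set.Icc (-S.τbar) t) := by
    refine ⟨2 * C, ?_⟩
    rintro r ⟨s, hs, rfl⟩
    exact hdX_le s hs
  have hdXt : S.dX t ≤ sSup (S.dX '' Set.Icc (-S.τbar) t) :=
    le_csSup hDbdd ⟨t, ⟨by linarith, le_refl t⟩, rfl⟩
  have hij : ‖S.x i t - S.x j t‖ ≤ S.dX t := by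
    apply le_csSup
    · refine ⟨2 * C, ?_⟩
      rintro r ⟨i', j', rfl⟩
      have h1 := hC i' t ⟨by linarith, le_refl t⟩
      have h2 := hC j' t ⟨by linarith, le_refl t⟩
      calc ‖S.x i' t - S.x j' t‖ ≤ ‖S.x i' t‖ + ‖S.x j' t‖ := norm_sub_le _ _
        _ ≤ 2 * C := by linarith
    · exact ⟨i, j, rfl⟩
  have hrR : ‖S.x i t - S.x j (t - S.τ t)‖
      ≤ S.τbar * S.C0V + S.M0X + sSup (S.dX '' Set.Icc (-S.τbar) t) := by
    rcases le_or_gt 0 (t - S.τ t) with h0u | h0u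
    · have hdisp := CSaux.disp S hN j (t - S.τ t) t h0u (by linarith [hτ.1])
      have htri : ‖S.x i t - S.x j (t - S.τ t)‖
          ≤ ‖S.x i t - S.x j t‖ + ‖S.x j t - S.x j (t - S.τ t)‖ :=
        norm_sub_le_norm_sub_add_norm_sub _ _ _
      have hCτ : S.C0V * (t - (t - S.τ t)) ≤ S.τbar * S.C0V := by
        have : t - (t - S.τ t) = S.τ t := by ring
        rw [this]
        nlinarith [hτ.2]
      linarith
    · have ht2 : t ≤ S.τbar := by linarith [hτ.2]
      have htri1 : ‖S.x i t - S.x j (t - S.τ t)‖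
          ≤ ‖S.x i t - S.x j 0‖ + ‖S.x j 0 - S.x j (t - S.τ t)‖ :=
        norm_sub_le_norm_sub_add_norm_sub _ _ _
      have htri2 : ‖S.x i t - S.x j 0‖
          ≤ ‖S.x i t - S.x j t‖ + ‖S.x j t - S.x j 0‖ :=
        norm_sub_le_norm_sub_add_norm_sub _ _ _
      have hdisp := CSaux.disp S hN j 0 t (le_refl 0) ht
      have hd2 : ‖S.x j t - S.x j 0‖ ≤ S.C0V * t := by
        simpa using hdisp
      have hd3 : S.C0V * t ≤ S.τbar * S.C0V := by nlinarith
      have hm : ‖S.x j 0 - S.x j (t - S.τ t)‖ ≤ S.M0X := by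
        apply le_csSup hM0Xbdd
        exact ⟨j, 0, ⟨by linarith, le_refl 0⟩, t - S.τ t,
          ⟨by linarith [hτ.2], h0u.le⟩, rfl⟩
      linarith
  have hphi : S.phi t ≤ S.ψ ‖S.x i t - S.x j (t - S.τ t)‖ := by
    apply csInf_le
    · refine ⟨0, ?_⟩
      rintro y ⟨r, _, rfl⟩
      exact (S.ψ_pos r).le
    · exact ⟨_, ⟨norm_nonneg _, hrR⟩, rfl⟩
  unfold CS.b
  exact div_le_div_of_nonneg_right hphi hN1.le
end
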